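/- arXiv:1306.5026 — 11 statements merged into one kernel-verified Lean document; each statement's English description precedes it below -/
import Mathlib

section
/- For every tree T on n ≥ 2 vertices, there exists a set S of vertices, all having the same degree in T, such that S is independent and |S| ≥ (n+2)/4. -/
/-!
Since a tree on `n` vertices has degree sum `2n - 2` and no isolated vertices, counting degrees
gives `n + 2 ≤ 2·#leaves + #(degree-2 vertices)`. If the leaves make up at least `(n + 2)/4`
vertices they form the set (for `n ≥ 3` no two leaves are adjacent); otherwise more than
`(n + 2)/2` vertices have degree 2, and the larger of the two colour classes of a proper
2-colouring of the tree contains at least half of them.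
-/

open Finset

namespace SimpleGraph

variable {V : Type*} {G : SimpleGraph V}

lemma Connected.not_adj_of_degree_eq_one [Fintype V] [DecidableRel G.Adj] (hG : G.Connected)
    (hV : 3 ≤ Fintype.card V) {u v : V} (hu : G.degree u = 1) (hv : G.degree v = 1) :
    ¬ G.Adj u v := by
  classical
  intro huv
  obtain ⟨w, -, hw⟩ : ∃ w ∈ univ, w ∉ ({u, v} : Finset V) :=
    exists_mem_notMem_of_card_lt_card (card_le_two.trans_lt (by rw [card_univ]; omega))
  have hnbr : ∀ {x y : V}, G.degree x = 1 → G.Adj x y → ∀ z, G.Adj x z → z = y :=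
    fun hx hxy z hxz => (degree_eq_one_iff_existsUnique_adj.mp hx).unique hxz hxy
  obtain ⟨d, -, hd, hd'⟩ := (hG.preconnected u w).some.exists_boundary_dart {u, v} (by simp)
    (by simpa using hw)
  rcases hd with hd | hd
  · exact hd' (Or.inr (hnbr hu huv _ (hd ▸ d.adj)))
  · exact hd' (Or.inl (hnbr hv huv.symm _ (hd ▸ d.adj)))

lemma Colorable.exists_indep_subset_div_le_card {k : ℕ} (hG : G.Colorable k) (hk : 0 < k)
    (s : Finset V) :
    ∃ S ⊆ s, (∀ u ∈ S, ∀ v ∈ S, ¬ G.Adj u v) ∧ (#s : ℝ) / k ≤ #S := by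
  classical
  obtain ⟨C⟩ := hG
  obtain ⟨a, -, ha⟩ := exists_le_card_fiber_of_nsmul_le_card_of_maps_to (s := s)
    (t := (univ : Finset (Fin k))) (f := C) (b := (#s : ℝ) / k) (by simp) ⟨⟨0, hk⟩, mem_univ _⟩
    (by rw [card_univ, Fintype.card_fin, nsmul_eq_mul]; field_simp; rfl)
  refine ⟨{v ∈ s | C v = a}, filter_subset _ _, fun u hu v hv huv => C.valid huv ?_, ha⟩
  rw [(mem_filter.mp hu).2, (mem_filter.mp hv).2]

lemma IsTree.card_add_two_le [Fintype V] [DecidableRel G.Adj] [Nontrivial V] (hG : G.IsTree) :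
    Fintype.card V + 2 ≤ 2 * #{v | G.degree v = 1} + #{v | G.degree v = 2} := by
  -- summed over all vertices: `3n ≤ (2n - 2) + 2·#{degree 1} + #{degree 2}`
  have hpoint : ∀ v, 3 ≤ G.degree v + 2 * (if G.degree v = 1 then 1 else 0)
      + (if G.degree v = 2 then 1 else 0) := fun v => by
    have := hG.connected.preconnected.degree_pos_of_nontrivial v
    split_ifs <;> omega
  have hsum := Finset.sum_le_sum (s := univ) fun v _ => hpoint v
  simp only [sum_add_distrib, ← mul_sum, sum_const, card_univ, smul_eq_mul, ← card_filter] at hsum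
  rw [sum_degrees_eq_twice_card_edges] at hsum
  have := hG.card_edgeFinset
  omega

end SimpleGraph

theorem regIndep_tree_general {V : Type*} [Fintype V] (T : SimpleGraph V)
    [DecidableRel T.Adj] (hconn : T.Connected) (hacyc : T.IsAcyclic)
    (hn : 2 ≤ Fintype.card V) :
    ∃ S : Finset V, (∃ d : ℕ, ∀ v ∈ S, T.degree v = d) ∧
      (∀ u ∈ S, ∀ v ∈ S, ¬ T.Adj u v) ∧
      ((Fintype.card V : ℝ) + 2) / 4 ≤ (S.card : ℝ) := by
  have : Nontrivial V := Fintype.one_lt_card_iff_nontrivial.mp hn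
  rcases hn.eq_or_lt with htwo | hthree
  · obtain ⟨v⟩ := hconn.nonempty
    refine ⟨{v}, ⟨T.degree v, fun w hw => mem_singleton.mp hw ▸ rfl⟩, by simp, ?_⟩
    norm_num [← htwo]
  by_cases hleaves : ((Fintype.card V : ℝ) + 2) / 4 ≤ #{v | T.degree v = 1}
  · exact ⟨_, ⟨1, fun v hv => (mem_filter.mp hv).2⟩, fun u hu v hv =>
      hconn.not_adj_of_degree_eq_one hthree (mem_filter.mp hu).2 (mem_filter.mp hv).2, hleaves⟩
  · have hcount : (Fintype.card V + 2 : ℝ) ≤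
        2 * #{v | T.degree v = 1} + #{v | T.degree v = 2} := by
      exact_mod_cast (show T.IsTree from ⟨hconn, hacyc⟩).card_add_two_le
    obtain ⟨S, hSB, hS, hcard⟩ :=
      hacyc.colorable_two.exists_indep_subset_div_le_card two_pos {v | T.degree v = 2}
    refine ⟨S, ⟨2, fun v hv => (mem_filter.mp (hSB hv)).2⟩, hS, ?_⟩
    push_cast at hcard
    linarith

/-- For every tree `T` on `n ≥ 2` vertices there is an independent set of vertices
all of the same degree of size at least `(n+2)/4`. -/
theorem regIndep_tree {V : Type*} [Fintype V] [DecidableEq V] (T : SimpleGraph V)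
    [DecidableRel T.Adj] (hconn : T.Connected) (hacyc : T.IsAcyclic)
    (hn : 2 ≤ Fintype.card V) :
    ∃ S : Finset V, (∃ d : ℕ, ∀ v ∈ S, T.degree v = d) ∧
      (∀ u ∈ S, ∀ v ∈ S, ¬ T.Adj u v) ∧
      ((Fintype.card V : ℝ) + 2) / 4 ≤ (S.card : ℝ) :=
  regIndep_tree_general T hconn hacyc hn
end

section
/- For every tree T on n ≥ 2 vertices and every integer k ≥ 2, there exists a set S of vertices, all of the same degree in T, such that the subgraph induced by S has maximum degree at most k and |S| ≥ (n+2)/3. -/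
/-!
Let `n₁`, `n₂`, `n₃` count the vertices of a tree of degree `1`, `2` and at least `3`.
Since no vertex is isolated, the degree sum `2n - 2` is at least `n₁ + 2n₂ + 3n₃ = 3n - 2n₁ - n₂`,
so `2n₁ + n₂ ≥ n + 2` and one of the two classes has at least `(n + 2)/3` vertices.
A vertex of degree at most `2 ≤ k` has at most `k` neighbours in any set.
-/

open Finset

namespace SimpleGraph

variable {V : Type*} [Fintype V] (G : SimpleGraph V) [DecidableRel G.Adj]

lemma card_filter_adj_le_degree (s : Finset V) (v : V) : #(s.filter (G.Adj v)) ≤ G.degree v := by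
  rw [← card_neighborFinset_eq_degree, neighborFinset_eq_filter]
  exact card_le_card (filter_subset_filter _ (subset_univ s))

variable {G}

lemma IsTree.sum_degrees_add_two (h : G.IsTree) :
    ∑ v, G.degree v + 2 = 2 * Fintype.card V := by
  classical
  have hedges := h.card_edgeFinset
  have hsum := G.sum_degrees_eq_twice_card_edges
  omega

lemma IsTree.card_add_two_le_two_mul_card_leaves_add_card_degree_two [Nontrivial V]
    (h : G.IsTree) :
    Fintype.card V + 2 ≤ 2 * #{v | G.degree v = 1} + #{v | G.degree v = 2} := by
  have pointwise (v : V) : 3 ≤ G.degree v + 2 * (if G.degree v = 1 then 1 else 0) +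
      (if G.degree v = 2 then 1 else 0) := by
    have := h.connected.preconnected.degree_pos_of_nontrivial v
    split_ifs <;> omega
  have hsum := sum_le_sum fun v (_ : v ∈ univ) => pointwise v
  simp only [sum_add_distrib, ← mul_sum, ← card_filter, sum_const, card_univ,
    smul_eq_mul] at hsum
  have := h.sum_degrees_add_two
  omega

end SimpleGraph

theorem regKIndep_tree_general {V : Type*} [Fintype V] (T : SimpleGraph V)
    [DecidableRel T.Adj] (hconn : T.Connected) (hacyc : T.IsAcyclic)
    (hn : 2 ≤ Fintype.card V) (k : ℕ) (hk : 2 ≤ k) :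
    ∃ S : Finset V, (∃ d : ℕ, ∀ v ∈ S, T.degree v = d) ∧
      (∀ v ∈ S, (S.filter (T.Adj v)).card ≤ k) ∧
      ((Fintype.card V : ℝ) + 2) / 3 ≤ (S.card : ℝ) := by
  have : Nontrivial V := Fintype.one_lt_card_iff_nontrivial.mp hn
  have hkey := SimpleGraph.IsTree.card_add_two_le_two_mul_card_leaves_add_card_degree_two
    ⟨hconn, hacyc⟩
  obtain ⟨d, hd, hcard⟩ : ∃ d ≤ 2, Fintype.card V + 2 ≤ 3 * #{v | T.degree v = d} := by
    rcases le_total #{v | T.degree v = 1} #{v | T.degree v = 2} with h | h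
    exacts [⟨2, le_rfl, by omega⟩, ⟨1, by norm_num, by omega⟩]
  refine ⟨({v | T.degree v = d} : Finset V), ⟨d, fun v hv => (mem_filter.mp hv).2⟩, fun v hv => ?_, ?_⟩
  · calc #(filter (T.Adj v) _) ≤ T.degree v := T.card_filter_adj_le_degree _ v
      _ = d := (mem_filter.mp hv).2
      _ ≤ k := hd.trans hk
  · rw [div_le_iff₀ three_pos]
    exact_mod_cast (by omega : Fintype.card V + 2 ≤ #{v | T.degree v = d} * 3)

/-- For every tree `T` on `n ≥ 2` vertices and every `k ≥ 2` there is a set of vertices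
all of the same degree, inducing a subgraph of maximum degree at most `k`, of size
at least `(n+2)/3`. -/
theorem regKIndep_tree {V : Type*} [Fintype V] [DecidableEq V] (T : SimpleGraph V)
    [DecidableRel T.Adj] (hconn : T.Connected) (hacyc : T.IsAcyclic)
    (hn : 2 ≤ Fintype.card V) (k : ℕ) (hk : 2 ≤ k) :
    ∃ S : Finset V, (∃ d : ℕ, ∀ v ∈ S, T.degree v = d) ∧
      (∀ v ∈ S, (S.filter (T.Adj v)).card ≤ k) ∧
      ((Fintype.card V : ℝ) + 2) / 3 ≤ (S.card : ℝ) :=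
  regKIndep_tree_general T hconn hacyc hn k hk
end

section
/- For every forest F on n vertices with n ≥ 3, there exists an independent set of vertices all having the same degree in F of size at least (n+2)/5. -/
/-!
Let `n₀`, `n₁`, `n₂` count the vertices of degree 0, 1, 2 and let `p` be the number of
components that are a single edge. Three regular independent sets are at hand: the isolated
vertices, the leaves minus one end of each single-edge component (`n₁ - p` vertices), and the
larger colour class of the degree-2 vertices in a 2-colouring of the forest (at least `n₂ / 2`
vertices).

If some vertex has degree at least 2, the forest has at least `n₀ + p + 1` components, hence at
most `n - n₀ - p - 1` edges, while by the handshake lemma twice the number of edges is at least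
`n₁ + 2 n₂ + 3 (n - n₀ - n₁ - n₂)`. Together, `n + 2 ≤ n₀ + 2 (n₁ - p) + n₂`: a combination of
the three sizes with weights 1, 2, 2, so one of them is at least `(n + 2) / 5`. If all degrees
are at most 1, the same count gives `n ≤ n₀ + 2 (n₁ - p)`, which suffices as `n ≥ 3`.
-/

open Finset

namespace SimpleGraph

variable {V : Type*} {G : SimpleGraph V}

lemma Reachable.mem_of_forall_adj_mem {s : Set V} (hs : ∀ x ∈ s, ∀ y, G.Adj x y → y ∈ s)
    {u v : V} (huv : G.Reachable u v) (hu : u ∈ s) : v ∈ s := by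
  obtain ⟨p⟩ := huv
  induction p with
  | nil => exact hu
  | cons h _ ih => exact ih (hs _ hu _ h)

lemma IsIsolated.eq_of_reachable {u v : V} (hu : G.IsIsolated u) (h : G.Reachable u v) :
    v = u :=
  h.mem_of_forall_adj_mem (s := {u}) (by rintro x rfl y hxy; exact (hu y hxy).elim) rfl

lemma exists_forall_not_reachable {H : SimpleGraph V} (hHG : H ≤ G) {x y : V}
    (hxy : G.Adj x y) (hH : ¬ H.Reachable x y) {C : Set V}
    (hC : C.Pairwise (¬ G.Reachable · ·)) : ∃ z, ∀ c ∈ C, ¬ H.Reachable z c := by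
  by_contra! h
  obtain ⟨cx, hcx, hx⟩ := h x
  obtain ⟨cy, hcy, hy⟩ := h y
  by_cases hc : cx = cy
  · subst hc
    exact hH (hx.trans hy.symm)
  · exact hC hcx hcy hc ((hx.mono hHG).symm.trans (hxy.reachable.trans (hy.mono hHG)))

/-- Deleting an edge of a forest disconnects its ends, so one of them can be added to `C`. -/
theorem IsAcyclic.ncard_edgeSet_add_card_le [Fintype V] (hG : G.IsAcyclic) {C : Finset V}
    (hC : (C : Set V).Pairwise (¬ G.Reachable · ·)) :
    G.edgeSet.ncard + #C ≤ Fintype.card V := by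
  classical
  induction hk : G.edgeSet.ncard generalizing G C with
  | zero => simpa using C.card_le_univ
  | succ k ih =>
    obtain ⟨e, he⟩ : G.edgeSet.Nonempty := Set.nonempty_of_ncard_ne_zero (by omega)
    induction e using Sym2.ind with
    | _ x y =>
    have hle := G.deleteEdges_le {s(x, y)}
    obtain ⟨z, hz⟩ := exists_forall_not_reachable hle he
      (isAcyclic_iff_forall_adj_isBridge.mp hG he) hC
    have hzC : z ∉ C := fun h => hz z h .rfl
    have hk' : (G.deleteEdges {s(x, y)}).edgeSet.ncard = k := by
      rw [edgeSet_deleteEdges, Set.ncard_sdiff_singleton_of_mem he]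
      omega
    have hC' : (insert z C : Set V).Pairwise (¬ (G.deleteEdges {s(x, y)}).Reachable · ·) :=
      (hC.mono' fun _ _ h h' => h (h'.mono hle)).insert
        fun c hc _ => ⟨hz c hc, fun h => hz c hc h.symm⟩
    have := ih (hG.anti hle) (C := insert z C) (by simpa using hC') hk'
    rw [card_insert_of_notMem hzC] at this
    omega

lemma Coloring.exists_isIndepSet_subset_card_le (col : G.Coloring (Fin 2)) (s : Finset V) :
    ∃ t ⊆ s, G.IsIndepSet (t : Set V) ∧ #s ≤ 2 * #t := by
  have hcard : #s = #{v ∈ s | col v = 0} + #{v ∈ s | col v = 1} := by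
    rw [card_eq_sum_card_fiberwise (t := (univ : Finset (Fin 2))) fun _ _ => mem_univ _,
      Fin.sum_univ_two]
  have hindep (c : Fin 2) : G.IsIndepSet (({v ∈ s | col v = c} : Finset V) : Set V) :=
    (col.isIndepSet_colorClass c).mono fun v hv => (mem_filter.mp hv).2
  rcases le_total #{v ∈ s | col v = 0} #{v ∈ s | col v = 1} with h | h
  · exact ⟨_, filter_subset _ _, hindep 1, by omega⟩
  · exact ⟨_, filter_subset _ _, hindep 0, by omega⟩

section

variable [Fintype V] [DecidableRel G.Adj]

variable (G) in
def verticesOfDegree (d : ℕ) : Finset V := {v | G.degree v = d}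

@[simp]
lemma mem_verticesOfDegree {d : ℕ} {v : V} : v ∈ G.verticesOfDegree d ↔ G.degree v = d := by
  simp [verticesOfDegree]

variable (G) in
theorem three_mul_card_le_two_mul_card_edgeFinset_add :
    3 * Fintype.card V ≤ 2 * #G.edgeFinset + 3 * #(G.verticesOfDegree 0) +
      2 * #(G.verticesOfDegree 1) + #(G.verticesOfDegree 2) := by
  classical
  calc 3 * Fintype.card V = ∑ _v : V, 3 := by simp [mul_comm]
    _ ≤ ∑ v, (G.degree v + 3 * (if G.degree v = 0 then 1 else 0) +
          2 * (if G.degree v = 1 then 1 else 0) + if G.degree v = 2 then 1 else 0) :=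
        sum_le_sum fun v _ => by split_ifs <;> omega
    _ = _ := by
        simp only [verticesOfDegree, sum_add_distrib, ← mul_sum, ← card_filter,
          sum_degrees_eq_twice_card_edges]

theorem IsAcyclic.card_add_two_mul_card_le (hG : G.IsAcyclic) {C : Finset V}
    (hC : (C : Set V).Pairwise (¬ G.Reachable · ·)) :
    Fintype.card V + 2 * #C ≤
      3 * #(G.verticesOfDegree 0) + 2 * #(G.verticesOfDegree 1) + #(G.verticesOfDegree 2) := by
  have hforest := hG.ncard_edgeSet_add_card_le hC
  rw [← coe_edgeFinset, Set.ncard_coe_finset] at hforest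
  have := G.three_mul_card_le_two_mul_card_edgeFinset_add
  omega

lemma eq_of_adj_of_degree_eq_one {v w w' : V} (hv : G.degree v = 1) (hw : G.Adj v w)
    (hw' : G.Adj v w') : w = w' :=
  (degree_eq_one_iff_existsUnique_adj.mp hv).unique hw hw'

lemma eq_or_eq_of_reachable_of_degree_eq_one {v w u : V} (hv : G.degree v = 1)
    (hw : G.degree w = 1) (hvw : G.Adj v w) (h : G.Reachable v u) : u = v ∨ u = w := by
  refine h.mem_of_forall_adj_mem (s := {v, w}) ?_ (by simp)
  rintro x (rfl | rfl) y hxy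
  · exact .inr (eq_of_adj_of_degree_eq_one hv hxy hvw)
  · exact .inl (eq_of_adj_of_degree_eq_one hw hxy hvw.symm)

variable (col : G.Coloring (Fin 2))

/-- One end, the one of colour `0`, of every component of `G` that is a single edge. -/
def Coloring.isolatedEdgeEnds : Finset V :=
  {v | G.degree v = 1 ∧ (∃ w, G.Adj v w ∧ G.degree w = 1) ∧ col v = 0}

lemma Coloring.isolatedEdgeEnds_subset : col.isolatedEdgeEnds ⊆ G.verticesOfDegree 1 :=
  fun _ hv => mem_verticesOfDegree.mpr (mem_filter.mp hv).2.1

variable [DecidableEq V]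

lemma Coloring.isIndepSet_sdiff_isolatedEdgeEnds :
    G.IsIndepSet ((G.verticesOfDegree 1 \ col.isolatedEdgeEnds : Finset V) : Set V) := by
  intro u hu v hv _ huv
  simp only [Coloring.isolatedEdgeEnds, mem_coe, mem_sdiff, mem_verticesOfDegree, mem_filter,
    mem_univ, true_and, not_and] at hu hv
  have hu0 := hu.2 hu.1 ⟨v, huv, hv.1⟩
  have hv0 := hv.2 hv.1 ⟨u, huv.symm, hu.1⟩
  exact col.valid huv ((Fin.eq_one_of_ne_zero _ hu0).trans (Fin.eq_one_of_ne_zero _ hv0).symm)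

lemma Coloring.degree_eq_one_of_reachable {x u : V}
    (hx : x ∈ G.verticesOfDegree 0 ∪ col.isolatedEdgeEnds) (hxu : G.Reachable x u)
    (hne : u ≠ x) : G.degree u = 1 ∧ u ∉ col.isolatedEdgeEnds := by
  simp only [Coloring.isolatedEdgeEnds, mem_union, mem_verticesOfDegree, mem_filter, mem_univ,
    true_and] at hx ⊢
  rcases hx with hx | ⟨hx, ⟨w, hxw, hw⟩, hx0⟩
  · exact (hne (((G.degree_eq_zero _).mp hx).eq_of_reachable hxu)).elim
  · obtain rfl := (eq_or_eq_of_reachable_of_degree_eq_one hx hw hxw hxu).resolve_left hne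
    exact ⟨hw, fun ⟨_, _, hu0⟩ => col.valid hxw (hx0.trans hu0.symm)⟩

lemma Coloring.pairwise_not_reachable_union_isolatedEdgeEnds :
    ((G.verticesOfDegree 0 ∪ col.isolatedEdgeEnds : Finset V) : Set V).Pairwise
      (¬ G.Reachable · ·) := by
  intro x hx y hy hxy hxy'
  obtain ⟨hy1, hyR⟩ := col.degree_eq_one_of_reachable hx hxy' hxy.symm
  rcases mem_union.mp (mem_coe.mp hy) with hy0 | hyR'
  · have := mem_verticesOfDegree.mp hy0
    omega
  · exact hyR hyR'

lemma Coloring.pairwise_not_reachable_insert_union_isolatedEdgeEnds {z : V}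
    (hz : 2 ≤ G.degree z) :
    ((insert z (G.verticesOfDegree 0 ∪ col.isolatedEdgeEnds) : Finset V) : Set V).Pairwise
      (¬ G.Reachable · ·) := by
  rw [coe_insert]
  refine col.pairwise_not_reachable_union_isolatedEdgeEnds.insert
    fun x hx hzx => ⟨fun h => ?_, fun h => ?_⟩
  · have := (col.degree_eq_one_of_reachable hx h.symm hzx).1
    omega
  · have := (col.degree_eq_one_of_reachable hx h hzx).1
    omega

lemma Coloring.card_union_isolatedEdgeEnds :
    #(G.verticesOfDegree 0 ∪ col.isolatedEdgeEnds) =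
      #(G.verticesOfDegree 0) + #col.isolatedEdgeEnds := by
  refine card_union_of_disjoint (Finset.disjoint_left.mpr fun v hv hv' => ?_)
  have := mem_verticesOfDegree.mp (col.isolatedEdgeEnds_subset hv')
  have := mem_verticesOfDegree.mp hv
  omega

theorem IsAcyclic.card_add_two_le_of_two_le_degree (hG : G.IsAcyclic) {z : V}
    (hz : 2 ≤ G.degree z) :
    Fintype.card V + 2 ≤ #(G.verticesOfDegree 0) +
      2 * #(G.verticesOfDegree 1 \ col.isolatedEdgeEnds) + #(G.verticesOfDegree 2) := by
  have h := hG.card_add_two_mul_card_le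
    (col.pairwise_not_reachable_insert_union_isolatedEdgeEnds hz)
  have hzC : z ∉ G.verticesOfDegree 0 ∪ col.isolatedEdgeEnds := fun hz' => by
    rcases mem_union.mp hz' with h0 | hR
    · have := mem_verticesOfDegree.mp h0
      omega
    · have := mem_verticesOfDegree.mp (col.isolatedEdgeEnds_subset hR)
      omega
  rw [card_insert_of_notMem hzC, col.card_union_isolatedEdgeEnds] at h
  have := card_sdiff_add_card_eq_card col.isolatedEdgeEnds_subset
  omega

theorem IsAcyclic.card_le_of_forall_degree_le_one (hG : G.IsAcyclic)
    (h : ∀ v, G.degree v ≤ 1) :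
    Fintype.card V ≤
      #(G.verticesOfDegree 0) + 2 * #(G.verticesOfDegree 1 \ col.isolatedEdgeEnds) := by
  have hC := hG.card_add_two_mul_card_le col.pairwise_not_reachable_union_isolatedEdgeEnds
  have h2 : #(G.verticesOfDegree 2) = 0 :=
    card_eq_zero.mpr (eq_empty_of_forall_notMem fun v hv => by
      have := h v
      have := mem_verticesOfDegree.mp hv
      omega)
  rw [col.card_union_isolatedEdgeEnds, h2] at hC
  have := card_sdiff_add_card_eq_card col.isolatedEdgeEnds_subset
  omega

end

theorem IsAcyclic.exists_isIndepSet_degree_eq_card_le [Fintype V] [DecidableRel G.Adj]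
    (hG : G.IsAcyclic) (hn : 3 ≤ Fintype.card V) :
    ∃ S : Finset V, (∃ d, ∀ v ∈ S, G.degree v = d) ∧ G.IsIndepSet (S : Set V) ∧
      Fintype.card V + 2 ≤ 5 * #S := by
  classical
  obtain ⟨col⟩ := hG.colorable_two
  obtain ⟨S₂, hS₂, hS₂indep, hS₂card⟩ := col.exists_isIndepSet_subset_card_le (G.verticesOfDegree 2)
  have hbound : Fintype.card V + 2 ≤ 5 * #(G.verticesOfDegree 0) ∨
      Fintype.card V + 2 ≤ 5 * #(G.verticesOfDegree 1 \ col.isolatedEdgeEnds) ∨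
      Fintype.card V + 2 ≤ 5 * #S₂ := by
    by_cases h : ∃ z, 2 ≤ G.degree z
    · obtain ⟨z, hz⟩ := h
      have := hG.card_add_two_le_of_two_le_degree col hz
      omega
    · have := hG.card_le_of_forall_degree_le_one col fun v => by
        have := not_exists.mp h v
        omega
      omega
  rcases hbound with h | h | h
  · refine ⟨_, ⟨0, fun v hv => mem_verticesOfDegree.mp hv⟩, fun u hu v _ _ huv => ?_, h⟩
    exact ((G.degree_eq_zero u).mp (mem_verticesOfDegree.mp hu)) v huv
  · exact ⟨_, ⟨1, fun v hv => mem_verticesOfDegree.mp (mem_sdiff.mp hv).1⟩,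
      col.isIndepSet_sdiff_isolatedEdgeEnds, h⟩
  · exact ⟨S₂, ⟨2, fun v hv => mem_verticesOfDegree.mp (hS₂ hv)⟩, hS₂indep, h⟩

end SimpleGraph

theorem regIndep_forest_general {V : Type*} [Fintype V] (F : SimpleGraph V)
    [DecidableRel F.Adj] (hacyc : F.IsAcyclic) (hn : 3 ≤ Fintype.card V) :
    ∃ S : Finset V, (∃ d : ℕ, ∀ v ∈ S, F.degree v = d) ∧
      (∀ u ∈ S, ∀ v ∈ S, ¬ F.Adj u v) ∧
      ((Fintype.card V : ℝ) + 2) / 5 ≤ (S.card : ℝ) := by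
  obtain ⟨S, hreg, hindep, hcard⟩ := hacyc.exists_isIndepSet_degree_eq_card_le hn
  refine ⟨S, hreg, fun u hu v hv huv => hindep hu hv huv.ne huv, ?_⟩
  rw [div_le_iff₀ (by norm_num)]
  exact_mod_cast (by omega : Fintype.card V + 2 ≤ S.card * 5)

/-- For every forest `F` on `n ≥ 3` vertices there is an independent set of vertices
all of the same degree of size at least `(n+2)/5`. -/
theorem regIndep_forest {V : Type*} [Fintype V] [DecidableEq V] (F : SimpleGraph V)
    [DecidableRel F.Adj] (hacyc : F.IsAcyclic) (hn : 3 ≤ Fintype.card V) :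
    ∃ S : Finset V, (∃ d : ℕ, ∀ v ∈ S, F.degree v = d) ∧
      (∀ u ∈ S, ∀ v ∈ S, ¬ F.Adj u v) ∧
      ((Fintype.card V : ℝ) + 2) / 5 ≤ (S.card : ℝ) :=
  regIndep_forest_general F hacyc hn
end

section
/- Let G be a graph on n vertices with average degree d, minimum degree δ, and k-chromatic number χ_k(G). Then the regular k-independence number satisfies α_{k-reg}(G) ≥ n / ((2d − 2δ + 1)·χ_k(G)). -/
open Finset

/-- The `k`-chromatic number: the least number of colors such that each color class
induces a subgraph of maximum degree at most `k`. -/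
noncomputable def chiK {V : Type*} [Fintype V] [DecidableEq V] (G : SimpleGraph V)
    [DecidableRel G.Adj] (k : ℕ) : ℕ :=
  sInf {c : ℕ | ∃ f : V → Fin c,
    ∀ v : V, (univ.filter (fun u => G.Adj v u ∧ f u = f v)).card ≤ k}

open Classical in
/-- The regular `k`-independence number: the maximum size of a set of vertices of
equal degree inducing a subgraph of maximum degree at most `k`. -/
noncomputable def regKIndepNum {V : Type*} [Fintype V] [DecidableEq V] (G : SimpleGraph V)
    [DecidableRel G.Adj] (k : ℕ) : ℕ :=
  univ.powerset.sup fun S =>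
    if (∃ d : ℕ, ∀ v ∈ S, G.degree v = d) ∧ (∀ v ∈ S, (S.filter (G.Adj v)).card ≤ k)
    then S.card else 0

/-!
Some degree is shared by at least `n / (2d - 2δ + 1)` vertices. Count ordered pairs `(u, v)`:
at most `n · rep` of them have `deg u = deg v`, and for a fixed `v` the vertices of smaller
degree fall into at most `deg v - δ` degree classes, hence number at most `rep · (deg v - δ)`.
Summing, `n² ≤ rep · (2 ∑ (deg v - δ) + n) = rep · n · (2d - 2δ + 1)`. A `χ_k`-coloring with
defect `k` splits a largest degree class into `χ_k` parts, and the largest part is a regular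
`k`-independent set.
-/

section Repetition

variable {α : Type*} [Fintype α] (f : α → ℕ) {m r : ℕ}

lemma card_filter_lt_le_mul (hm : ∀ a, m ≤ f a) (hr : ∀ D, #{a | f a = D} ≤ r) (a : α) :
    #{b | f b < f a} ≤ r * (f a - m) := by
  have hmaps : ∀ b ∈ ({b | f b < f a} : Finset α), f b ∈ Ico m (f a) := fun b hb =>
    mem_Ico.2 ⟨hm b, (mem_filter.1 hb).2⟩
  calc #{b | f b < f a} ≤ r * #(Ico m (f a)) :=
        card_le_mul_card_image_of_maps_to hmaps r fun D _ =>
          (card_le_card (filter_subset_filter _ (subset_univ _))).trans (hr D)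
    _ = r * (f a - m) := by rw [Nat.card_Ico]

theorem sq_card_le_of_card_fiber_le (hm : ∀ a, m ≤ f a) (hr : ∀ D, #{a | f a = D} ≤ r) :
    Fintype.card α ^ 2 ≤ r * (2 * ∑ a, (f a - m) + Fintype.card α) := by
  have htri : ∀ a, Fintype.card α ≤
      #{b | f b < f a} + #{b | f a < f b} + #{b | f b = f a} := by
    classical
    intro a
    calc Fintype.card α = #(univ : Finset α) := card_univ.symm
      _ ≤ #(({b | f b < f a} : Finset α) ∪ ({b | f a < f b} : Finset α) ∪
            ({b | f b = f a} : Finset α)) :=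
          card_le_card fun b _ => by simp only [mem_union, mem_filter, mem_univ, true_and]; omega
      _ ≤ _ := (card_union_le _ _).trans (Nat.add_le_add_right (card_union_le _ _) _)
  have hswap : ∑ a, #{b | f a < f b} = ∑ b, #{a | f a < f b} :=
    sum_card_bipartiteAbove_eq_sum_card_bipartiteBelow (fun a b => f a < f b)
  calc Fintype.card α ^ 2 = ∑ _a : α, Fintype.card α := by simp [sq]
    _ ≤ ∑ a, (#{b | f b < f a} + #{b | f a < f b} + #{b | f b = f a}) :=
        sum_le_sum fun a _ => htri a
    _ = 2 * ∑ a, #{b | f b < f a} + ∑ a, #{b | f b = f a} := by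
        rw [sum_add_distrib, sum_add_distrib, hswap]; ring
    _ ≤ 2 * ∑ a, r * (f a - m) + ∑ _a : α, r := by
        gcongr with a _ a _
        · exact card_filter_lt_le_mul f hm hr a
        · exact hr _
    _ = r * (2 * ∑ a, (f a - m) + Fintype.card α) := by simp [← mul_sum]; ring

theorem exists_sq_card_le_card_fiber_mul [Nonempty α] (hm : ∀ a, m ≤ f a) :
    ∃ D, Fintype.card α ^ 2 ≤ #{a | f a = D} * (2 * ∑ a, (f a - m) + Fintype.card α) := by
  obtain ⟨a₀, -, hmax⟩ := exists_max_image univ (fun a => #{b | f b = f a}) univ_nonempty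
  refine ⟨f a₀, sq_card_le_of_card_fiber_le f hm fun D => ?_⟩
  obtain hempty | ⟨a, ha⟩ := ({a | f a = D} : Finset α).eq_empty_or_nonempty
  · simp [hempty]
  · rw [← (mem_filter.1 ha).2]
    exact hmax a (mem_univ a)

end Repetition

namespace SimpleGraph

variable {V : Type*} [Fintype V] (G : SimpleGraph V) [DecidableRel G.Adj]

theorem exists_card_degree_eq_mul_ge [Nonempty V] :
    ∃ D, (Fintype.card V : ℝ) ≤ #{v | G.degree v = D} *
      (2 * ((∑ v, (G.degree v : ℝ)) / Fintype.card V) - 2 * G.minDegree + 1) := by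
  obtain ⟨D, hD⟩ := exists_sq_card_le_card_fiber_mul (fun v => G.degree v) G.minDegree_le_degree
  refine ⟨D, ?_⟩
  have hn : (0 : ℝ) < Fintype.card V := Nat.cast_pos.2 Fintype.card_pos
  have hsum : ((∑ v, (G.degree v - G.minDegree) : ℕ) : ℝ) =
      ∑ v, (G.degree v : ℝ) - Fintype.card V * G.minDegree := by
    simp [Nat.cast_sub (G.minDegree_le_degree _), sum_sub_distrib]
  have hD' : (Fintype.card V : ℝ) ^ 2 ≤ #{v | G.degree v = D} *
      (2 * (∑ v, (G.degree v : ℝ) - Fintype.card V * G.minDegree) + Fintype.card V) := by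
    rw [← hsum]; exact_mod_cast hD
  calc (Fintype.card V : ℝ) = (Fintype.card V : ℝ) ^ 2 / Fintype.card V := by field_simp
    _ ≤ #{v | G.degree v = D} *
        (2 * (∑ v, (G.degree v : ℝ) - Fintype.card V * G.minDegree) + Fintype.card V) /
          Fintype.card V := by gcongr
    _ = _ := by field_simp

variable [DecidableEq V]

theorem exists_coloring_chiK (k : ℕ) :
    ∃ f : V → Fin (chiK G k), ∀ v, #{u | G.Adj v u ∧ f u = f v} ≤ k := by
  refine Nat.sInf_mem (s := {c | ∃ f : V → Fin c, ∀ v, #{u | G.Adj v u ∧ f u = f v} ≤ k})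
    ⟨Fintype.card V, Fintype.equivFin V, fun v => ?_⟩
  rw [filter_false_of_mem fun u _ ⟨hadj, heq⟩ =>
    G.ne_of_adj hadj ((Fintype.equivFin V).injective heq).symm]
  exact (card_empty).trans_le k.zero_le

variable {k : ℕ}

theorem card_le_regKIndepNum {S : Finset V} (hreg : ∃ D, ∀ v ∈ S, G.degree v = D)
    (hsparse : ∀ v ∈ S, #(S.filter (G.Adj v)) ≤ k) : #S ≤ regKIndepNum G k :=
  le_sup_of_le (mem_powerset.2 (subset_univ S)) (by rw [if_pos ⟨hreg, hsparse⟩])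

theorem card_colorClass_le_regKIndepNum {S : Finset V} (hreg : ∃ D, ∀ v ∈ S, G.degree v = D)
    {c : ℕ} {f : V → Fin c} (hf : ∀ v, #{u | G.Adj v u ∧ f u = f v} ≤ k) (i : Fin c) :
    #{v ∈ S | f v = i} ≤ regKIndepNum G k := by
  refine G.card_le_regKIndepNum ?_ fun v hv => (card_le_card fun u hu => ?_).trans (hf v)
  · obtain ⟨D, hD⟩ := hreg
    exact ⟨D, fun v hv => hD v (mem_filter.1 hv).1⟩
  · simp only [mem_filter, mem_univ, true_and] at hu hv ⊢
    exact ⟨hu.2, hu.1.2.trans hv.2.symm⟩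

end SimpleGraph

/-- `α_{k-reg}(G) ≥ n / ((2d − 2δ + 1) · χ_k(G))` where `d` is the average degree and
`δ` the minimum degree. -/
theorem regKIndepNum_lower_bound {V : Type*} [Fintype V] [DecidableEq V] [Nonempty V]
    (G : SimpleGraph V) [DecidableRel G.Adj] (k : ℕ) (d : ℝ)
    (hd : d = (∑ v : V, (G.degree v : ℝ)) / (Fintype.card V : ℝ)) :
    (Fintype.card V : ℝ) / ((2 * d - 2 * (G.minDegree : ℝ) + 1) * (chiK G k : ℝ))
      ≤ (regKIndepNum G k : ℝ) := by
  obtain ⟨f, hf⟩ := G.exists_coloring_chiK k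
  have hχ : (0 : ℝ) < chiK G k := Nat.cast_pos.2 (Fin.pos (f (Classical.arbitrary V)))
  obtain ⟨D, hD⟩ := G.exists_card_degree_eq_mul_ge
  rw [← hd] at hD
  set R : Finset V := {v | G.degree v = D}
  have hcoef : 0 < 2 * d - 2 * G.minDegree + 1 :=
    pos_of_mul_pos_right ((Nat.cast_pos.2 Fintype.card_pos).trans_le hD) (Nat.cast_nonneg _)
  obtain ⟨i, -, hi⟩ := exists_le_card_fiber_of_nsmul_le_card_of_maps_to
    (fun v _ => mem_univ (f v)) ⟨f (Classical.arbitrary V), mem_univ _⟩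
    (b := (#R : ℝ) / chiK G k)
    (by rw [card_univ, Fintype.card_fin, nsmul_eq_mul, mul_div_cancel₀ _ hχ.ne'])
  calc (Fintype.card V : ℝ) / ((2 * d - 2 * G.minDegree + 1) * chiK G k)
      = (Fintype.card V : ℝ) / (2 * d - 2 * G.minDegree + 1) / chiK G k := by rw [div_div]
    _ ≤ #R / chiK G k := by gcongr; exact (div_le_iff₀ hcoef).2 hD
    _ ≤ #{v ∈ R | f v = i} := hi
    _ ≤ regKIndepNum G k := mod_cast
        G.card_colorClass_le_regKIndepNum ⟨D, fun v hv => (mem_filter.1 hv).2⟩ hf i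
end

section
/- Every graph G on n vertices with average degree d and minimum degree δ has at least n/(2d − 2δ + 1) vertices of equal degree; that is, the repetition number rep(G) satisfies rep(G) ≥ n/(2d − 2δ + 1). -/
open Finset

/-- The repetition number of `G`: the maximum number of vertices of equal degree. -/
noncomputable def repNum {V : Type*} [Fintype V] [DecidableEq V] (G : SimpleGraph V)
    [DecidableRel G.Adj] : ℕ :=
  (Finset.range (Fintype.card V + 1)).sup fun j =>
    (univ.filter (fun v => G.degree v = j)).card

/-!
Let `r = rep(G)`. Every degree class has at most `r` vertices and all degrees lie in `[δ, ∞)`,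
so at most `(deg v - δ + 1) r` vertices have degree `≤ deg v` and at most `(deg v - δ) r` have
degree `< deg v`. Summing both counts over `v` counts every ordered pair of vertices exactly once,
hence `n² ≤ r ∑ᵥ (2 (deg v - δ) + 1) = r n (2d - 2δ + 1)`.
-/

section FibreCounting

variable {α : Type*} [Fintype α] (f : α → ℕ) {r : ℕ}

theorem card_filter_lt_le_mul_s8 (hf : ∀ j, #{a | f a = j} ≤ r) (k : ℕ) :
    #{a | f a < k} ≤ k * r := by
  calc #{a | f a < k}
      ≤ r * #(({a | f a < k} : Finset α).image f) :=
        card_le_mul_card_image _ r fun j _ =>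
          (card_le_card (filter_subset_filter _ (subset_univ _))).trans (hf j)
    _ ≤ r * k := by
        gcongr
        exact (card_le_card (image_subset_iff.2 fun a ha => mem_range.2 (mem_filter.1 ha).2)).trans
          (card_range k).le
    _ = k * r := mul_comm r k

theorem sum_card_filter_le_add_sum_card_filter_lt :
    ∑ a, #{b | f b ≤ f a} + ∑ a, #{b | f b < f a} = Fintype.card α ^ 2 := by
  have hswap : ∑ a, #{b | f b < f a} = ∑ a, #{b | f a < f b} := by
    simp only [card_filter]
    exact sum_comm
  rw [hswap, ← sum_add_distrib]
  have hsplit : ∀ a, #{b | f b ≤ f a} + #{b | f a < f b} = Fintype.card α := fun a => by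
    simpa [not_le] using card_filter_add_card_filter_not (s := univ) (fun b => f b ≤ f a)
  simp [hsplit, sq]

theorem card_sq_le_mul_sum (hf : ∀ j, #{a | f a = j} ≤ r) :
    Fintype.card α ^ 2 ≤ r * ∑ a, (2 * f a + 1) := by
  rw [← sum_card_filter_le_add_sum_card_filter_lt f, ← sum_add_distrib, mul_sum]
  refine sum_le_sum fun a _ => ?_
  have hle : #{b | f b ≤ f a} ≤ (f a + 1) * r := by
    simpa only [Nat.lt_succ_iff] using card_filter_lt_le_mul_s8 f hf (f a + 1)
  have hlt := card_filter_lt_le_mul_s8 f hf (f a)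
  linarith

end FibreCounting

namespace SimpleGraph

variable {V : Type*} [Fintype V] [DecidableEq V] (G : SimpleGraph V) [DecidableRel G.Adj]

theorem card_filter_degree_eq_le_repNum (j : ℕ) : #{v | G.degree v = j} ≤ repNum G := by
  rcases lt_or_ge j (Fintype.card V + 1) with hj | hj
  · exact le_sup (f := fun j => #{v | G.degree v = j}) (mem_range.2 hj)
  · have hempty : ({v | G.degree v = j} : Finset V) = ∅ :=
      filter_eq_empty_iff.2 fun v _ => by have := G.degree_lt_card_verts v; omega
    simp [hempty]

theorem card_sq_le_repNum_mul_sum :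
    Fintype.card V ^ 2 ≤ repNum G * ∑ v, (2 * (G.degree v - G.minDegree) + 1) := by
  refine card_sq_le_mul_sum _ fun j => ?_
  have hfibre : #{v | G.degree v - G.minDegree = j} = #{v | G.degree v = j + G.minDegree} := by
    congr 1
    exact filter_congr fun v _ => by have := G.minDegree_le_degree v; omega
  rw [hfibre]
  exact G.card_filter_degree_eq_le_repNum _

end SimpleGraph

theorem repNum_lower_bound_general {V : Type*} [Fintype V] [DecidableEq V]
    (G : SimpleGraph V) [DecidableRel G.Adj] (d : ℝ)
    (hd : d = (∑ v : V, (G.degree v : ℝ)) / (Fintype.card V : ℝ)) :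
    (Fintype.card V : ℝ) / (2 * d - 2 * (G.minDegree : ℝ) + 1) ≤ (repNum G : ℝ) := by
  set n := Fintype.card V
  rcases Nat.eq_zero_or_pos n with hn | hn
  · simp [hn]
  have hnR : (0 : ℝ) < n := by exact_mod_cast hn
  have hsum : ((∑ v, (2 * (G.degree v - G.minDegree) + 1) : ℕ) : ℝ) =
      n * (2 * d - 2 * G.minDegree + 1) := by
    push_cast [Nat.cast_sub (G.minDegree_le_degree _)]
    rw [hd, sum_add_distrib, ← mul_sum, sum_sub_distrib]
    field_simp
    simp only [sum_const, card_univ, nsmul_eq_mul, mul_one]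
    ring
  have hsq : (n : ℝ) ^ 2 ≤ repNum G * (n * (2 * d - 2 * G.minDegree + 1)) := by
    rw [← hsum]
    exact_mod_cast G.card_sq_le_repNum_mul_sum
  have hD : 0 < 2 * d - 2 * G.minDegree + 1 := by
    by_contra! hD
    have : (repNum G : ℝ) * (n * (2 * d - 2 * G.minDegree + 1)) ≤ 0 :=
      mul_nonpos_of_nonneg_of_nonpos (Nat.cast_nonneg _) (mul_nonpos_of_nonneg_of_nonpos hnR.le hD)
    linarith [pow_pos hnR 2]
  rw [div_le_iff₀ hD]
  exact le_of_mul_le_mul_left (by linarith) hnR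

/-- `rep(G) ≥ n / (2d − 2δ + 1)` where `d` is the average degree and `δ` the minimum
degree. -/
theorem repNum_lower_bound {V : Type*} [Fintype V] [DecidableEq V] [Nonempty V]
    (G : SimpleGraph V) [DecidableRel G.Adj] (d : ℝ)
    (hd : d = (∑ v : V, (G.degree v : ℝ)) / (Fintype.card V : ℝ)) :
    (Fintype.card V : ℝ) / (2 * d - 2 * (G.minDegree : ℝ) + 1) ≤ (repNum G : ℝ) :=
  repNum_lower_bound_general G d hd
end

section
/- Let G be a k-tree on n = k + t + 2 vertices, where t ≥ 1 is an integer. Then the number of vertices of degree k + t in G is at most t + 1. -/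
open Finset

/-- `G` is a `k`-tree: there is an enumeration of the vertices in which the first
`k+1` vertices form a clique and every later vertex has exactly `k` earlier
neighbors, which form a clique. -/
def IsKTree {V : Type*} [Fintype V] [DecidableEq V] (k : ℕ) (G : SimpleGraph V)
    [DecidableRel G.Adj] : Prop :=
  ∃ f : V ≃ Fin (Fintype.card V),
    (∀ u v : V, (f u : ℕ) < k + 1 → (f v : ℕ) < k + 1 → u ≠ v → G.Adj u v) ∧
    (∀ v : V, k + 1 ≤ (f v : ℕ) →
      (univ.filter (fun u => G.Adj u v ∧ (f u : ℕ) < (f v : ℕ))).card = k ∧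
      ∀ u w : V, G.Adj u v → G.Adj w v → (f u : ℕ) < (f v : ℕ) → (f w : ℕ) < (f v : ℕ) →
        u ≠ w → G.Adj u w)

/-!
In the complement `Gᶜ`, the vertices of degree `k + t = n - 2` are exactly the leaves. The last
vertex `a` of a `k`-tree enumeration has degree `k` and a clique as neighbourhood, so it has
`t + 1` neighbours in `Gᶜ`, and every edge of `Gᶜ` meets the closed `Gᶜ`-neighbourhood of `a`.
Charge each leaf to a `Gᶜ`-neighbour of `a`: to itself, or else to its unique `Gᶜ`-neighbour.
The charging is injective because no vertex `u` of `Gᶜ` has two leaf neighbours `v, v'`: there is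
always a `k`-clique of earlier neighbours (of `u`, or of the earlier of `v, v'`) avoiding
`u, v, v'`, and together with `v, v'` it would form a `(k + 2)`-clique, which a `k`-tree does not
contain.
-/

namespace SimpleGraph

section

variable {V : Type*} [Fintype V] (G : SimpleGraph V) [DecidableRel G.Adj]

def earlierNeighborFinset (f : V ≃ Fin (Fintype.card V)) (v : V) : Finset V :=
  {u | G.Adj u v ∧ (f u : ℕ) < f v}

variable {G}

@[simp]
theorem mem_earlierNeighborFinset {f : V ≃ Fin (Fintype.card V)} {u v : V} :
    u ∈ G.earlierNeighborFinset f v ↔ G.Adj u v ∧ (f u : ℕ) < f v := by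
  simp [earlierNeighborFinset]

end

theorem eq_of_degree_eq_one {V : Type*} {G : SimpleGraph V} {v x y : V}
    [Fintype (G.neighborSet v)] (h : G.degree v = 1) (hx : G.Adj v x) (hy : G.Adj v y) : x = y :=
  (degree_eq_one_iff_existsUnique_adj.1 h).unique hx hy

variable {V : Type*} [Fintype V] [DecidableEq V] {G : SimpleGraph V} [DecidableRel G.Adj]

theorem adj_of_compl_degree_eq_one {u v w : V} (hv : Gᶜ.degree v = 1) (huv : Gᶜ.Adj u v)
    (hwv : w ≠ v) (hwu : w ≠ u) : G.Adj v w := by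
  by_contra h
  exact hwu (eq_of_degree_eq_one hv ((compl_adj _ _ _).2 ⟨hwv.symm, h⟩) huv.symm)

theorem card_compl_degree_eq_one_le {a : V} (hclique : G.IsClique (G.neighborSet a))
    (ha : Gᶜ.degree a ≠ 1)
    (hleaf : ∀ u v v', Gᶜ.Adj u v → Gᶜ.Adj u v' → Gᶜ.degree v = 1 → Gᶜ.degree v' = 1 → v = v') :
    #{v | Gᶜ.degree v = 1} ≤ Gᶜ.degree a := by
  refine card_le_card_of_forall_subsingleton (fun v m => v = m ∨ Gᶜ.Adj v m) ?_ ?_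
  · intro v hv
    replace hv : Gᶜ.degree v = 1 := (mem_filter.1 hv).2
    by_cases hav : Gᶜ.Adj a v
    · exact ⟨v, (mem_neighborFinset _ _ _).2 hav, Or.inl rfl⟩
    obtain ⟨u, hvu, -⟩ := degree_eq_one_iff_existsUnique_adj.1 hv
    refine ⟨u, (mem_neighborFinset _ _ _).2 ?_, Or.inr hvu⟩
    have hGav : G.Adj a v := by
      have hva : v ≠ a := by rintro rfl; exact ha hv
      simpa [compl_adj, hva.symm] using hav
    have hua : u ≠ a := by rintro rfl; exact hav hvu.symm
    by_contra hau
    have hGau : G.Adj a u := by simpa [compl_adj, hua.symm] using hau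
    exact ((compl_adj _ _ _).1 hvu).2 (hclique hGav hGau ((compl_adj _ _ _).1 hvu).1)
  · intro m hm v₁ ⟨hv₁, h₁⟩ v₂ ⟨hv₂, h₂⟩
    replace hv₁ : Gᶜ.degree v₁ = 1 := (mem_filter.1 hv₁).2
    replace hv₂ : Gᶜ.degree v₂ = 1 := (mem_filter.1 hv₂).2
    have ham : Gᶜ.Adj m a := ((mem_neighborFinset _ _ _).1 hm).symm
    -- a leaf adjacent to `a` has no other neighbour, and `a` is not a leaf
    have hleaf_a : Gᶜ.degree m = 1 → ∀ v, Gᶜ.Adj m v → Gᶜ.degree v = 1 → False :=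
      fun hm v hmv hv => ha (eq_of_degree_eq_one hm hmv ham ▸ hv)
    rcases h₁ with rfl | h₁ <;> rcases h₂ with rfl | h₂
    · rfl
    · exact (hleaf_a hv₁ v₂ h₂.symm hv₂).elim
    · exact (hleaf_a hv₂ v₁ h₁.symm hv₁).elim
    · exact hleaf m v₁ v₂ h₁.symm h₂.symm hv₁ hv₂

end SimpleGraph

open SimpleGraph

structure IsKTreeOrder {V : Type*} [Fintype V] (k : ℕ) (G : SimpleGraph V) [DecidableRel G.Adj]
    (f : V ≃ Fin (Fintype.card V)) : Prop where
  adj_of_lt : ∀ u v, (f u : ℕ) < k + 1 → (f v : ℕ) < k + 1 → u ≠ v → G.Adj u v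
  isNClique_earlierNeighborFinset :
    ∀ v, k + 1 ≤ (f v : ℕ) → G.IsNClique k (G.earlierNeighborFinset f v)

section KTree

variable {V : Type*} [Fintype V] {k : ℕ} {G : SimpleGraph V} [DecidableRel G.Adj]
  {f : V ≃ Fin (Fintype.card V)}

theorem IsKTreeOrder.exists_degree_eq_isClique (hf : IsKTreeOrder k G f)
    (hn : k + 1 < Fintype.card V) : ∃ a, G.degree a = k ∧ G.IsClique (G.neighborSet a) := by
  set a := f.symm ⟨Fintype.card V - 1, by omega⟩
  have hfa : (f a : ℕ) = Fintype.card V - 1 := by simp [a]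
  have hN : G.neighborFinset a = G.earlierNeighborFinset f a := by
    ext u
    rw [mem_neighborFinset, mem_earlierNeighborFinset]
    refine ⟨fun h => ⟨h.symm, ?_⟩, fun h => h.1.symm⟩
    have : (f u : ℕ) ≠ f a := fun h' => G.ne_of_adj h (f.injective (Fin.ext h'.symm))
    have := (f u).isLt
    omega
  have hC := hf.isNClique_earlierNeighborFinset a (by omega)
  refine ⟨a, ?_, ?_⟩
  · rw [← card_neighborFinset_eq_degree, hN, hC.card_eq]
  · rw [← coe_neighborFinset, hN]
    exact hC.isClique

variable [DecidableEq V]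

theorem IsKTree.exists_isKTreeOrder (hG : IsKTree k G) : ∃ f, IsKTreeOrder k G f := by
  obtain ⟨f, hbase, hstep⟩ := hG
  refine ⟨f, hbase, fun v hv => ⟨fun u hu w hw huw => ?_, (hstep v hv).1⟩⟩
  rw [mem_coe, mem_earlierNeighborFinset] at hu hw
  exact (hstep v hv).2 u w hu.1 hw.1 hu.2 hw.2 huw

-- The last vertex of a clique has all the others among its earlier neighbours.
theorem IsKTreeOrder.cliqueFree (hf : IsKTreeOrder k G f) : G.CliqueFree (k + 2) := by
  intro T hT
  obtain ⟨w, hwT, hwmax⟩ := T.exists_max_image (fun u => (f u : ℕ))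
    (by rw [← card_pos, hT.card_eq]; omega)
  by_cases hw : k + 1 ≤ (f w : ℕ)
  · have hsub : T.erase w ⊆ G.earlierNeighborFinset f w := fun u hu => by
      obtain ⟨huw, huT⟩ := mem_erase.1 hu
      exact mem_earlierNeighborFinset.2 ⟨hT.isClique huT hwT huw,
        (hwmax u huT).lt_of_ne fun h => huw (f.injective (Fin.ext h))⟩
    have := card_le_card hsub
    rw [card_erase_of_mem hwT, hT.card_eq, (hf.isNClique_earlierNeighborFinset w hw).card_eq]
      at this
    omega
  · have := card_le_card_of_injOn (fun u => (f u : ℕ)) (t := range (k + 1))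
      (fun u hu => mem_range.2 ((hwmax u hu).trans_lt (not_le.1 hw)))
      (fun x _ y _ h => f.injective (Fin.ext h))
    rw [hT.card_eq, card_range] at this
    omega

theorem IsKTreeOrder.eq_of_forall_adj_except (hf : IsKTreeOrder k G f) {u v v' : V}
    (huv : ¬G.Adj u v) (huv' : ¬G.Adj u v')
    (hv : ∀ w, w ≠ v → w ≠ u → G.Adj v w) (hv' : ∀ w, w ≠ v' → w ≠ u → G.Adj v' w) :
    v = v' := by
  wlog hlt : (f v : ℕ) < f v' generalizing v v'
  · rcases (not_lt.1 hlt).lt_or_eq with h | h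
    · exact (this huv' huv hv' hv h).symm
    · exact f.injective (Fin.ext h.symm)
  have hvv' : v ≠ v' := fun h => hlt.ne (h ▸ rfl)
  have hvu : v ≠ u := by rintro rfl; exact huv' (hv v' hvv'.symm hvv'.symm)
  have hv'u : v' ≠ u := by rintro rfl; exact huv (hv' v hvv' hvv')
  obtain ⟨x, hx, hux, hvx, hv'x⟩ : ∃ x, k + 1 ≤ (f x : ℕ) ∧ u ∉ G.earlierNeighborFinset f x ∧
      v ∉ G.earlierNeighborFinset f x ∧ v' ∉ G.earlierNeighborFinset f x := by
    by_cases hu : k + 1 ≤ (f u : ℕ)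
    · refine ⟨u, hu, ?_, ?_, ?_⟩ <;> rw [mem_earlierNeighborFinset] <;> intro h
      exacts [G.irrefl h.1, huv h.1.symm, huv' h.1.symm]
    · have hvlate : k + 1 ≤ (f v : ℕ) := by
        by_contra h
        exact huv (hf.adj_of_lt u v (by omega) (by omega) hvu.symm)
      refine ⟨v, hvlate, ?_, ?_, ?_⟩ <;> rw [mem_earlierNeighborFinset] <;> intro h
      exacts [huv h.1, G.irrefl h.1, by omega]
  have hne_of_mem : ∀ w ∈ G.earlierNeighborFinset f x, w ≠ u ∧ w ≠ v ∧ w ≠ v' :=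
    fun w hw => ⟨ne_of_mem_of_not_mem hw hux, ne_of_mem_of_not_mem hw hvx,
      ne_of_mem_of_not_mem hw hv'x⟩
  have hC' : G.IsNClique (k + 1) (insert v' (G.earlierNeighborFinset f x)) :=
    (hf.isNClique_earlierNeighborFinset x hx).insert
      fun w hw => hv' w (hne_of_mem w hw).2.2 (hne_of_mem w hw).1
  refine (hf.cliqueFree _ (hC'.insert (a := v) fun w hw => ?_)).elim
  rcases mem_insert.1 hw with rfl | hw
  · exact hv w hvv'.symm hv'u
  · exact hv w (hne_of_mem w hw).2.1 (hne_of_mem w hw).1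

end KTree

/-- In a `k`-tree on `n = k + t + 2` vertices (`t ≥ 1`), the number of vertices of
degree `k + t` is at most `t + 1`. -/
theorem ktree_count_top_degree {V : Type*} [Fintype V] [DecidableEq V] (k t : ℕ)
    (ht : 1 ≤ t) (G : SimpleGraph V) [DecidableRel G.Adj] (hG : IsKTree k G)
    (hn : Fintype.card V = k + t + 2) :
    (univ.filter (fun v => G.degree v = k + t)).card ≤ t + 1 := by
  obtain ⟨f, hf⟩ := hG.exists_isKTreeOrder
  obtain ⟨a, hdeg_a, hclique⟩ := hf.exists_degree_eq_isClique (by omega)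
  have hcompl : ∀ v, Gᶜ.degree v = k + t + 1 - G.degree v := fun v => by
    rw [degree_compl, hn]
    rfl
  have htop : ∀ v, G.degree v = k + t ↔ Gᶜ.degree v = 1 := fun v => by
    have := G.degree_lt_card_verts v
    rw [hcompl]
    omega
  have hleaf : ∀ u v v', Gᶜ.Adj u v → Gᶜ.Adj u v' → Gᶜ.degree v = 1 → Gᶜ.degree v' = 1 →
      v = v' := fun u v v' huv huv' hv hv' =>
    hf.eq_of_forall_adj_except ((compl_adj _ _ _).1 huv).2 ((compl_adj _ _ _).1 huv').2
      (fun _ => adj_of_compl_degree_eq_one hv huv) (fun _ => adj_of_compl_degree_eq_one hv' huv')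
  calc #{v | G.degree v = k + t}
      = #{v | Gᶜ.degree v = 1} := congr_arg card (filter_congr fun v _ => htop v)
    _ ≤ Gᶜ.degree a := card_compl_degree_eq_one_le hclique (by rw [hcompl, hdeg_a]; omega) hleaf
    _ = t + 1 := by rw [hcompl, hdeg_a]; omega
end

section
/- Let G be a k-tree on n ≥ k + t + 2 vertices, where t ≥ 0 is an integer. Then the subgraph of G induced by the vertices of degree k + t has chromatic number at most (t² + t + 2)/2. -/
/-!
Colour greedily along the construction order of the `k`-tree. The earlier neighbours of degree
`k + t` of a vertex `v` of degree `k + t` form, with `v`, a clique of vertices of degree `k + t`,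
and such a clique has at most `t + 1` vertices when `n ≥ k + t + 2`; so `t + 1 ≤ (t² + t + 2)/2`
colours suffice.

For the clique bound, extend the clique to a `(k+1)`-clique `K` and show, by induction on the
number `i` of vertices of the prefix `k`-tree, that at most `s` vertices of `K` have degree
`< k + s` once `i ≥ k + s + 1`. Deleting the last vertex `z` leaves the degrees in `K` unchanged
or, if `z ∈ K`, lowers those in `K \ {z}` by one (and `K \ {z}` extends to a `(k+1)`-clique of
the smaller `k`-tree). In the base case `i = k + s + 1`, a `k`-tree on `i` vertices has at least
`2k + 2 - i` universal vertices; they lie in `K` and have degree `i - 1`.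
-/

open Finset

theorem SimpleGraph.colorable_of_card_lower_neighbors_le {V α : Type*} [Fintype V]
    [LinearOrder α] (G : SimpleGraph V) [DecidableRel G.Adj] (pos : V → α)
    (hpos : Function.Injective pos) (d : ℕ)
    (h : ∀ v, #{u | G.Adj u v ∧ pos u < pos v} ≤ d) : G.Colorable (d + 1) := by
  classical
  suffices ∀ s : Finset V, ∃ c : V → Fin (d + 1), ∀ u ∈ s, ∀ v ∈ s, G.Adj u v → c u ≠ c v by
    obtain ⟨c, hc⟩ := this univ
    exact ⟨⟨c, fun huv => hc _ (mem_univ _) _ (mem_univ _) huv⟩⟩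
  intro s
  induction s using Finset.induction_on_max_value pos with
  | empty => exact ⟨fun _ => 0, by simp⟩
  | insert a s ha hmax ih =>
    obtain ⟨c, hc⟩ := ih
    have hlower : ∀ u ∈ s, pos u < pos a := fun u hu =>
      (hmax u hu).lt_of_ne (hpos.ne (ne_of_mem_of_not_mem hu ha))
    obtain ⟨κ, -, hκ⟩ : ∃ κ ∈ (univ : Finset (Fin (d + 1))), κ ∉ image c {u ∈ s | G.Adj u a} := by
      refine exists_mem_notMem_of_card_lt_card ?_
      calc #(image c {u ∈ s | G.Adj u a}) ≤ #{u ∈ s | G.Adj u a} := card_image_le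
        _ ≤ #{u | G.Adj u a ∧ pos u < pos a} :=
          card_le_card fun u hu => by
            simp only [mem_filter, mem_univ, true_and] at hu ⊢
            exact ⟨hu.2, hlower u hu.1⟩
        _ < #(univ : Finset (Fin (d + 1))) := by simpa using Nat.lt_succ_of_le (h a)
    have hκ' : ∀ u ∈ s, G.Adj u a → κ ≠ c u := fun u hu hua hcu =>
      hκ (mem_image.2 ⟨u, mem_filter.2 ⟨hu, hua⟩, hcu.symm⟩)
    have hnew : ∀ x ∈ s, G.Adj x a → Function.update c a κ x ≠ Function.update c a κ a :=
      fun x hx hxa => by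
        rw [Function.update_self, Function.update_of_ne hxa.ne]
        exact (hκ' x hx hxa).symm
    refine ⟨Function.update c a κ, fun u hu v hv huv => ?_⟩
    rcases eq_or_ne u a with rfl | hua
    · exact (hnew v ((mem_insert.1 hv).resolve_left huv.ne.symm) huv.symm).symm
    rcases eq_or_ne v a with rfl | hva
    · exact hnew u ((mem_insert.1 hu).resolve_left hua) huv
    rw [Function.update_of_ne hua, Function.update_of_ne hva]
    exact hc u ((mem_insert.1 hu).resolve_left hua) v ((mem_insert.1 hv).resolve_left hva) huv

section KTree

variable {V : Type*} [Fintype V]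

structure KTreeOrder (k : ℕ) (G : SimpleGraph V) [DecidableRel G.Adj] where
  ord : V ≃ Fin (Fintype.card V)
  adj_of_lt : ∀ u v : V, (ord u : ℕ) < k + 1 → (ord v : ℕ) < k + 1 → u ≠ v → G.Adj u v
  card_lower : ∀ v : V, k + 1 ≤ (ord v : ℕ) → #{u | G.Adj u v ∧ (ord u : ℕ) < ord v} = k
  adj_of_lower : ∀ v : V, k + 1 ≤ (ord v : ℕ) → ∀ u w : V, G.Adj u v → G.Adj w v →
    (ord u : ℕ) < ord v → (ord w : ℕ) < ord v → u ≠ w → G.Adj u w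

theorem IsKTree.nonempty_kTreeOrder [DecidableEq V] {k : ℕ} {G : SimpleGraph V}
    [DecidableRel G.Adj] (hG : IsKTree k G) : Nonempty (KTreeOrder k G) :=
  let ⟨f, hbase, hstep⟩ := hG
  ⟨⟨f, hbase, fun v hv => (hstep v hv).1, fun v hv => (hstep v hv).2⟩⟩

namespace KTreeOrder

variable {k : ℕ} {G : SimpleGraph V} [DecidableRel G.Adj] (o : KTreeOrder k G)

def pos (v : V) : ℕ := o.ord v

def vertexAt (i : ℕ) (hi : i < Fintype.card V) : V := o.ord.symm ⟨i, hi⟩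

def initial (i : ℕ) : Finset V := {v | o.pos v < i}

/-- `#(o.initialNbrs i v)` is the degree of `v` in the `k`-tree induced on the first `i`
vertices. -/
def initialNbrs (i : ℕ) (v : V) : Finset V := {u ∈ o.initial i | G.Adj u v}

/-- The vertices of `o.initial i` adjacent to all others, detected by counting. -/
def universal (i : ℕ) : Finset V := {v ∈ o.initial i | #(o.initialNbrs i v) + 1 = i}

variable {o}

theorem pos_injective : Function.Injective o.pos :=
  Fin.val_injective.comp o.ord.injective

theorem pos_lt_card (v : V) : o.pos v < Fintype.card V := (o.ord v).2

@[simp]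
theorem pos_vertexAt {i : ℕ} (hi : i < Fintype.card V) : o.pos (o.vertexAt i hi) = i := by
  simp [pos, vertexAt]

@[simp]
theorem mem_initial {i : ℕ} {v : V} : v ∈ o.initial i ↔ o.pos v < i := by
  simp [initial]

@[simp]
theorem mem_initialNbrs {i : ℕ} {u v : V} : u ∈ o.initialNbrs i v ↔ o.pos u < i ∧ G.Adj u v := by
  simp [initialNbrs]

theorem initial_mono {i j : ℕ} (hij : i ≤ j) : o.initial i ⊆ o.initial j := fun _ hv =>
  mem_initial.2 ((mem_initial.1 hv).trans_le hij)

theorem card_initial {i : ℕ} (hi : i ≤ Fintype.card V) : #(o.initial i) = i := by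
  rw [← card_range i]
  refine card_nbij o.pos (fun v hv => by simpa using hv) o.pos_injective.injOn fun m hm => ?_
  have hm : m < i := by simpa using hm
  exact ⟨o.vertexAt m (hm.trans_le hi), by simpa using hm, by simp⟩

theorem initial_succ [DecidableEq V] {i : ℕ} (hi : i < Fintype.card V) :
    o.initial (i + 1) = insert (o.vertexAt i hi) (o.initial i) := by
  ext v
  rw [mem_insert, mem_initial, mem_initial, Nat.lt_succ_iff_lt_or_eq, or_comm]
  refine or_congr_left ⟨fun h => o.pos_injective (by simpa using h), fun h => by simp [h]⟩

theorem isClique_initial {i : ℕ} (hi : i ≤ k + 1) : G.IsClique (o.initial i : Set V) :=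
  fun u hu w hw huw => o.adj_of_lt u w ((mem_initial.1 hu).trans_le hi)
    ((mem_initial.1 hw).trans_le hi) huw

theorem initialNbrs_subset_initial (i : ℕ) (v : V) : o.initialNbrs i v ⊆ o.initial i :=
  filter_subset _ _

theorem initialNbrs_mono {i j : ℕ} (hij : i ≤ j) (v : V) :
    o.initialNbrs i v ⊆ o.initialNbrs j v :=
  filter_subset_filter _ (o.initial_mono hij)

theorem card_initialNbrs_succ_of_adj {i : ℕ} (hi : i < Fintype.card V) {v : V}
    (hadj : G.Adj v (o.vertexAt i hi)) :
    #(o.initialNbrs (i + 1) v) = #(o.initialNbrs i v) + 1 := by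
  classical
  rw [initialNbrs, o.initial_succ hi, filter_insert, if_pos hadj.symm, card_insert_of_notMem]
  · rfl
  · simp

theorem card_initialNbrs_card (v : V) : #(o.initialNbrs (Fintype.card V) v) = G.degree v := by
  rw [← G.card_neighborFinset_eq_degree]
  congr 1
  ext u
  simp [o.pos_lt_card, G.adj_comm]

theorem card_initialNbrs_add_one_le {i : ℕ} (hi : i ≤ Fintype.card V) {v : V}
    (hv : v ∈ o.initial i) : #(o.initialNbrs i v) + 1 ≤ i := by
  classical
  calc #(o.initialNbrs i v) + 1 ≤ #((o.initial i).erase v) + 1 := by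
        gcongr
        exact fun u hu => mem_erase.2 ⟨G.ne_of_adj (mem_initialNbrs.1 hu).2,
          o.initialNbrs_subset_initial i v hu⟩
    _ = i := by rw [card_erase_add_one hv, o.card_initial hi]

theorem initialNbrs_pos_of_lt {v : V} (hv : o.pos v < k + 1) :
    o.initialNbrs (o.pos v) v = o.initial (o.pos v) :=
  filter_true_of_mem fun u hu => o.adj_of_lt u v ((mem_initial.1 hu).trans hv) hv
    fun h => (mem_initial.1 hu).ne (congrArg o.pos h)

theorem card_initialNbrs_pos (v : V) : #(o.initialNbrs (o.pos v) v) = min (o.pos v) k := by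
  by_cases hv : o.pos v < k + 1
  · rw [o.initialNbrs_pos_of_lt hv, o.card_initial (o.pos_lt_card v).le]
    omega
  · rw [min_eq_right (by omega)]
    refine (congrArg card ?_).trans (o.card_lower v (by simpa [pos] using hv))
    ext u
    simp [pos, and_comm]

theorem isClique_insert_initialNbrs_pos [DecidableEq V] (v : V) :
    G.IsClique ((insert v (o.initialNbrs (o.pos v) v) : Finset V) : Set V) := by
  rw [coe_insert, SimpleGraph.isClique_insert]
  refine ⟨?_, fun u hu _ => (mem_initialNbrs.1 hu).2.symm⟩
  by_cases hv : o.pos v < k + 1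
  · rw [o.initialNbrs_pos_of_lt hv]
    exact o.isClique_initial hv.le
  · intro u hu w hw huw
    rw [mem_coe, mem_initialNbrs] at hu hw
    exact o.adj_of_lower v (by simpa [pos] using hv) u w hu.2 hw.2 hu.1 hw.1 huw

theorem subset_insert_initialNbrs_of_isClique [DecidableEq V] {Q : Finset V}
    (hQ : G.IsClique (Q : Set V)) {q : V} (hq : q ∈ Q) (hmax : ∀ u ∈ Q, o.pos u ≤ o.pos q) :
    Q ⊆ insert q (o.initialNbrs (o.pos q) q) := by
  intro u hu
  rcases eq_or_ne u q with rfl | huq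
  · exact mem_insert_self _ _
  · exact mem_insert_of_mem (mem_initialNbrs.2
      ⟨(hmax u hu).lt_of_ne (o.pos_injective.ne huq), hQ hu hq huq⟩)

theorem card_le_of_isClique (o : KTreeOrder k G) {Q : Finset V} (hQ : G.IsClique (Q : Set V)) :
    #Q ≤ k + 1 := by
  classical
  obtain rfl | hne := Q.eq_empty_or_nonempty
  · simp
  obtain ⟨q, hq, hmax⟩ := Q.exists_max_image o.pos hne
  calc #Q ≤ #(insert q (o.initialNbrs (o.pos q) q)) :=
        card_le_card (o.subset_insert_initialNbrs_of_isClique hQ hq hmax)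
    _ ≤ #(o.initialNbrs (o.pos q) q) + 1 := card_insert_le _ _
    _ ≤ k + 1 := by rw [card_initialNbrs_pos]; omega

theorem exists_isClique_superset {i : ℕ} (hk : k + 1 ≤ i) (hi : i ≤ Fintype.card V)
    {Q : Finset V} (hQ : G.IsClique (Q : Set V)) (hQi : Q ⊆ o.initial i) :
    ∃ K : Finset V, G.IsClique (K : Set V) ∧ #K = k + 1 ∧ Q ⊆ K ∧ K ⊆ o.initial i := by
  classical
  by_cases h : ∃ p ∈ Q, k ≤ o.pos p
  · obtain ⟨p, hp, hkp⟩ := h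
    obtain ⟨q, hq, hmax⟩ := Q.exists_max_image o.pos ⟨p, hp⟩
    have hqi : o.pos q < i := mem_initial.1 (hQi hq)
    refine ⟨insert q (o.initialNbrs (o.pos q) q), o.isClique_insert_initialNbrs_pos q, ?_,
      o.subset_insert_initialNbrs_of_isClique hQ hq hmax,
      insert_subset (hQi hq) ((o.initialNbrs_subset_initial _ q).trans (o.initial_mono hqi.le))⟩
    rw [card_insert_of_notMem (by simp), card_initialNbrs_pos]
    have := hmax p hp
    omega
  · push Not at h
    exact ⟨o.initial (k + 1), o.isClique_initial le_rfl, o.card_initial (hk.trans hi),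
      fun u hu => mem_initial.2 (by linarith [h u hu]), o.initial_mono hk⟩

theorem le_card_initialNbrs {i : ℕ} (hk : k + 1 ≤ i) (hi : i ≤ Fintype.card V) {v : V}
    (hv : v ∈ o.initial i) : k ≤ #(o.initialNbrs i v) := by
  classical
  obtain ⟨K, hK, hKc, hvK, hKi⟩ := o.exists_isClique_superset hk hi (Q := {v})
    (by simp) (singleton_subset_iff.2 hv)
  have hv : v ∈ K := singleton_subset_iff.1 hvK
  calc k = #(K.erase v) := by rw [card_erase_of_mem hv, hKc, Nat.add_sub_cancel]
    _ ≤ #(o.initialNbrs i v) := card_le_card fun u hu => by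
      obtain ⟨huv, hu⟩ := mem_erase.1 hu
      exact mem_initialNbrs.2 ⟨mem_initial.1 (hKi hu), hK hu hv huv⟩

theorem adj_of_mem_universal {i : ℕ} (hi : i ≤ Fintype.card V) {u v : V}
    (hv : v ∈ o.universal i) (hu : u ∈ o.initial i) (huv : u ≠ v) : G.Adj u v := by
  classical
  obtain ⟨hvi, hcard⟩ := mem_filter.1 hv
  have hsub : o.initialNbrs i v ⊆ (o.initial i).erase v := fun w hw =>
    mem_erase.2 ⟨G.ne_of_adj (mem_initialNbrs.1 hw).2, o.initialNbrs_subset_initial i v hw⟩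
  have heq := eq_of_subset_of_card_le hsub (by
    rw [card_erase_of_mem hvi, o.card_initial hi]
    omega)
  exact (mem_initialNbrs.1 (heq ▸ mem_erase.2 ⟨huv, hu⟩)).2

theorem isClique_insert_of_mem_universal [DecidableEq V] {i : ℕ} (hi : i ≤ Fintype.card V)
    {v : V} (hv : v ∈ o.universal i) {Q : Finset V} (hQ : G.IsClique (Q : Set V))
    (hQi : Q ⊆ o.initial i) : G.IsClique ((insert v Q : Finset V) : Set V) := by
  rw [coe_insert, SimpleGraph.isClique_insert]
  exact ⟨hQ, fun w hw hvw => (o.adj_of_mem_universal hi hv (hQi hw) hvw.symm).symm⟩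

theorem universal_subset_of_isClique {i : ℕ} (hi : i ≤ Fintype.card V) {K : Finset V}
    (hK : G.IsClique (K : Set V)) (hKc : #K = k + 1) (hKi : K ⊆ o.initial i) :
    o.universal i ⊆ K := by
  classical
  intro u hu
  by_contra huK
  have := o.card_le_of_isClique (o.isClique_insert_of_mem_universal hi hu hK hKi)
  rw [card_insert_of_notMem huK] at this
  omega

/-- Two such vertices would complete a `(k+2)`-clique with the `k` lower neighbours of the new
vertex. -/
theorem card_filter_universal_not_adj_le_one {i : ℕ} (hk : k + 1 ≤ i)
    (hi : i < Fintype.card V) : #{v ∈ o.universal i | ¬G.Adj v (o.vertexAt i hi)} ≤ 1 := by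
  classical
  set z := o.vertexAt i hi
  have hz : o.pos z = i := o.pos_vertexAt hi
  set N := o.initialNbrs i z
  have hNi : N ⊆ o.initial i := o.initialNbrs_subset_initial i z
  have hN : G.IsClique (N : Set V) := by
    have := o.isClique_insert_initialNbrs_pos z
    rw [hz] at this
    exact this.subset (coe_subset.2 (subset_insert _ _))
  have hNcard : #N = k := by
    have := o.card_initialNbrs_pos z
    rwa [hz, min_eq_right (by omega)] at this
  rw [card_le_one]
  intro a ha b hb
  by_contra hab
  rw [mem_filter] at ha hb
  have haN : a ∉ N := fun h => ha.2 (mem_initialNbrs.1 h).2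
  have hbN : b ∉ N := fun h => hb.2 (mem_initialNbrs.1 h).2
  have hclique := o.isClique_insert_of_mem_universal hi.le ha.1
    (o.isClique_insert_of_mem_universal hi.le hb.1 hN hNi)
    (insert_subset (mem_filter.1 hb.1).1 hNi)
  have := o.card_le_of_isClique hclique
  rw [card_insert_of_notMem (by simp [hab, haN]), card_insert_of_notMem hbN, hNcard] at this
  omega

theorem le_card_universal_add {i : ℕ} (hk : k + 1 ≤ i) (hi : i ≤ Fintype.card V) :
    2 * k + 2 ≤ #(o.universal i) + i := by
  classical
  induction i, hk using Nat.le_induction with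
  | base =>
    have : o.universal (k + 1) = o.initial (k + 1) := filter_true_of_mem fun v hv =>
      le_antisymm (o.card_initialNbrs_add_one_le hi hv)
        (Nat.succ_le_succ (o.le_card_initialNbrs le_rfl hi hv))
    rw [this, o.card_initial hi]
    omega
  | succ i hk ih =>
    have hin : i < Fintype.card V := hi
    have hkept : {v ∈ o.universal i | G.Adj v (o.vertexAt i hin)} ⊆ o.universal (i + 1) :=
      fun v hv => by
        obtain ⟨hv, hvz⟩ := mem_filter.1 hv
        obtain ⟨hvi, hcard⟩ := mem_filter.1 hv
        refine mem_filter.2 ⟨o.initial_mono i.le_succ hvi, ?_⟩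
        rw [o.card_initialNbrs_succ_of_adj hin hvz, hcard]
    have := card_le_card hkept
    have := card_filter_add_card_filter_not (s := o.universal i)
      (fun v => G.Adj v (o.vertexAt i hin))
    have := o.card_filter_universal_not_adj_le_one hk hin
    have := ih hin.le
    omega

theorem card_filter_card_initialNbrs_lt_le_of_eq {i s : ℕ} (hsi : k + s + 1 = i)
    (hi : i ≤ Fintype.card V) {K : Finset V} (hK : G.IsClique (K : Set V)) (hKc : #K = k + 1)
    (hKi : K ⊆ o.initial i) : #{v ∈ K | #(o.initialNbrs i v) < k + s} ≤ s := by
  classical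
  have hdisj : Disjoint {v ∈ K | #(o.initialNbrs i v) < k + s} (o.universal i) :=
    disjoint_left.2 fun v hv hvu => by
      have := (mem_filter.1 hv).2
      have := (mem_filter.1 hvu).2
      omega
  have := card_le_card (union_subset (filter_subset (fun v => #(o.initialNbrs i v) < k + s) K)
    (o.universal_subset_of_isClique hi hK hKc hKi))
  rw [card_union_of_disjoint hdisj] at this
  have := o.le_card_universal_add (by omega) hi
  omega

theorem card_filter_card_initialNbrs_lt_le {i s : ℕ} (hsi : k + s + 1 ≤ i)
    (hi : i ≤ Fintype.card V) {K : Finset V} (hK : G.IsClique (K : Set V)) (hKc : #K = k + 1)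
    (hKi : K ⊆ o.initial i) : #{v ∈ K | #(o.initialNbrs i v) < k + s} ≤ s := by
  classical
  induction i generalizing s K with
  | zero => omega
  | succ i ih =>
    rcases s with _ | s
    · rw [Nat.le_zero, card_eq_zero, filter_eq_empty_iff]
      exact fun v hv => not_lt.2 (o.le_card_initialNbrs (by omega) hi (hKi hv))
    rcases hsi.eq_or_lt with hsi | hsi
    · exact o.card_filter_card_initialNbrs_lt_le_of_eq hsi hi hK hKc hKi
    have hin : i < Fintype.card V := hi
    set z := o.vertexAt i hin
    rw [o.initial_succ hin] at hKi
    by_cases hzK : z ∈ K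
    · obtain ⟨K', hK', hK'c, hzK', hK'i⟩ := o.exists_isClique_superset (Q := K.erase z)
        (by omega) hin.le (hK.subset (by simp)) (subset_insert_iff.1 hKi)
      calc #{v ∈ K | #(o.initialNbrs (i + 1) v) < k + (s + 1)}
          ≤ #(insert z {v ∈ K' | #(o.initialNbrs i v) < k + s}) := card_le_card fun v hv => by
            obtain ⟨hvK, hv⟩ := mem_filter.1 hv
            rcases eq_or_ne v z with rfl | hvz
            · exact mem_insert_self _ _
            · rw [o.card_initialNbrs_succ_of_adj hin (hK hvK hzK hvz)] at hv
              exact mem_insert_of_mem (mem_filter.2 ⟨hzK' (mem_erase.2 ⟨hvz, hvK⟩), by omega⟩)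
        _ ≤ #{v ∈ K' | #(o.initialNbrs i v) < k + s} + 1 := card_insert_le _ _
        _ ≤ s + 1 := by gcongr; exact ih (by omega) hin.le hK' hK'c hK'i
    · calc #{v ∈ K | #(o.initialNbrs (i + 1) v) < k + (s + 1)}
          ≤ #{v ∈ K | #(o.initialNbrs i v) < k + (s + 1)} := card_le_card fun v hv => by
            rw [mem_filter] at hv ⊢
            exact ⟨hv.1, (card_le_card (o.initialNbrs_mono i.le_succ v)).trans_lt hv.2⟩
        _ ≤ s + 1 := ih (by omega) hin.le hK hKc ((subset_insert_iff_of_notMem hzK).1 hKi)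

theorem card_le_of_isClique_of_degree_le (o : KTreeOrder k G) {t : ℕ}
    (hn : k + t + 2 ≤ Fintype.card V) {C : Finset V} (hC : G.IsClique (C : Set V)) (hdeg : ∀ v ∈ C, G.degree v ≤ k + t) :
    #C ≤ t + 1 := by
  obtain ⟨K, hK, hKc, hCK, hKi⟩ := o.exists_isClique_superset (by omega) le_rfl hC
    fun v _ => mem_initial.2 (o.pos_lt_card v)
  calc #C ≤ #{v ∈ K | #(o.initialNbrs (Fintype.card V) v) < k + (t + 1)} :=
        card_le_card fun v hv => mem_filter.2 ⟨hCK hv, by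
          rw [card_initialNbrs_card]
          linarith [hdeg v hv]⟩
    _ ≤ t + 1 := o.card_filter_card_initialNbrs_lt_le (by omega) le_rfl hK hKc hKi

theorem colorable_induce_degree_eq (o : KTreeOrder k G) {t : ℕ} (hn : k + t + 2 ≤ Fintype.card V) :
    (G.induce {v | G.degree v = k + t}).Colorable (t + 1) := by
  classical
  refine SimpleGraph.colorable_of_card_lower_neighbors_le _ (o.pos ∘ Subtype.val)
    (o.pos_injective.comp Subtype.val_injective) t fun v => ?_
  set C := {u ∈ o.initialNbrs (o.pos v) v | G.degree u = k + t}
  have hC : #(insert v.1 C) ≤ t + 1 := by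
    refine o.card_le_of_isClique_of_degree_le hn
      ((o.isClique_insert_initialNbrs_pos v.1).subset ?_) fun u hu => ?_
    · exact coe_subset.2 (insert_subset_insert _ (filter_subset _ _))
    · rcases mem_insert.1 hu with rfl | hu
      · exact v.2.le
      · exact (mem_filter.1 hu).2.le
  rw [card_insert_of_notMem (by simp [C])] at hC
  calc _ ≤ #C := card_le_card_of_injOn Subtype.val (fun u hu => by
          simp only [coe_filter, mem_univ, true_and, Set.mem_ofPred_eq,
            SimpleGraph.comap_adj, Function.Embedding.coe_subtype] at hu
          simp only [C, coe_filter, mem_initialNbrs, Set.mem_ofPred_eq]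
          exact ⟨⟨hu.2, hu.1⟩, u.2⟩) Subtype.val_injective.injOn
    _ ≤ t := by omega

end KTreeOrder

end KTree

/-- In a `k`-tree on `n ≥ k + t + 2` vertices (`t ≥ 0`), the subgraph induced by the
vertices of degree `k + t` has chromatic number at most `(t² + t + 2)/2`. -/
theorem ktree_chromatic_degree_class {V : Type*} [Fintype V] [DecidableEq V] (k t : ℕ)
    (G : SimpleGraph V) [DecidableRel G.Adj] (hG : IsKTree k G)
    (hn : k + t + 2 ≤ Fintype.card V) :
    (G.induce {v : V | G.degree v = k + t}).chromaticNumber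
      ≤ (((t ^ 2 + t + 2) / 2 : ℕ) : ℕ∞) := by
  obtain ⟨o⟩ := hG.nonempty_kTreeOrder
  calc (G.induce {v : V | G.degree v = k + t}).chromaticNumber ≤ (t + 1 : ℕ) :=
        (o.colorable_induce_degree_eq hn).chromaticNumber_le
    _ ≤ (((t ^ 2 + t + 2) / 2 : ℕ) : ℕ∞) := by
      gcongr
      rw [Nat.le_div_iff_mul_le two_pos]
      nlinarith
end

section
/- In a maximal planar graph on n ≥ 5 vertices, the set of vertices of degree 3 forms an independent set. -/
/-!
Deleting two adjacent vertices of degree `3` from a graph with `3n - 6` edges removes only `5`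
edges, leaving `3(n - 2) - 5` edges on `n - 2 ≥ 3` vertices. By Mader's theorem for `K₅` (at least
`3n - 5` edges on `n ≥ 3` vertices force a `K₅` minor) what is left has a `K₅` minor, which
planarity forbids.

Mader's bound for `K_k`, `k ≤ 5`, follows by induction on `k` and on the size of the graph: a
vertex of degree less than `k - 1` is deleted, an edge in fewer than `k - 2` triangles is
contracted, and otherwise a vertex of small degree has a neighbourhood dense enough to contain a
`K_{k-1}` minor, which that vertex completes to a `K_k` minor.
-/

open Finset

/-- `G` has `H` as a minor: there are disjoint nonempty connected branch sets in `G`,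
one for each vertex of `H`, with an edge of `G` between the branch sets of any two
adjacent vertices of `H`. -/
def HasMinor {V W : Type*} (G : SimpleGraph V) (H : SimpleGraph W) : Prop :=
  ∃ B : W → Set V, (∀ w, (B w).Nonempty) ∧
    (∀ w₁ w₂, w₁ ≠ w₂ → Disjoint (B w₁) (B w₂)) ∧
    (∀ w, (G.induce (B w)).Connected) ∧
    (∀ w₁ w₂, H.Adj w₁ w₂ → ∃ u ∈ B w₁, ∃ v ∈ B w₂, G.Adj u v)

/-- Planarity, via Wagner's theorem: no `K₅` minor and no `K₃,₃` minor. -/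
def IsPlanar {V : Type*} (G : SimpleGraph V) : Prop :=
  ¬ HasMinor G (⊤ : SimpleGraph (Fin 5)) ∧
  ¬ HasMinor G (completeBipartiteGraph (Fin 3) (Fin 3))

namespace SimpleGraph

variable {V V' W : Type*} {G : SimpleGraph V} {G' : SimpleGraph V'} {H : SimpleGraph W}

structure IsMinorModel (G : SimpleGraph V) (H : SimpleGraph W) (B : W → Set V) : Prop where
  nonempty (w : W) : (B w).Nonempty
  disjoint ⦃w₁ w₂ : W⦄ : w₁ ≠ w₂ → Disjoint (B w₁) (B w₂)
  connected (w : W) : (G.induce (B w)).Connected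
  exists_adj ⦃w₁ w₂ : W⦄ : H.Adj w₁ w₂ → ∃ u ∈ B w₁, ∃ v ∈ B w₂, G.Adj u v

theorem hasMinor_iff_exists_isMinorModel : HasMinor G H ↔ ∃ B, G.IsMinorModel H B :=
  ⟨fun ⟨B, h₁, h₂, h₃, h₄⟩ => ⟨B, h₁, h₂, h₃, h₄⟩, fun ⟨B, h⟩ => ⟨B, h.1, h.2, h.3, h.4⟩⟩

theorem isMinorModel_singleton (H : SimpleGraph W) : H.IsMinorModel H ({·}) where
  nonempty w := Set.singleton_nonempty w
  disjoint _ _ h := Set.disjoint_singleton.mpr h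
  connected w := by rw [induce_singleton_eq_top]; exact connected_top
  exists_adj w₁ w₂ h := ⟨w₁, rfl, w₂, rfl, h⟩

theorem IsMinorModel.map {B : W → Set V} (hB : G.IsMinorModel H B) (f : Copy G G') :
    G'.IsMinorModel H (fun w => f '' B w) where
  nonempty w := (hB.nonempty w).image f
  disjoint _ _ h := (Set.disjoint_image_iff f.injective).mpr (hB.disjoint h)
  connected w := by
    let φ : G.induce (B w) →g G'.induce (f '' B w) :=
      ⟨fun v => ⟨f v, Set.mem_image_of_mem f v.2⟩, fun h => f.toHom.map_adj h⟩
    refine (hB.connected w).map φ ?_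
    rintro ⟨_, v, hv, rfl⟩
    exact ⟨⟨v, hv⟩, rfl⟩
  exists_adj _ _ h := by
    obtain ⟨u, hu, v, hv, huv⟩ := hB.exists_adj h
    exact ⟨f u, Set.mem_image_of_mem f hu, f v, Set.mem_image_of_mem f hv, f.toHom.map_adj huv⟩

theorem IsMinorModel.subset_support {B : W → Set V} (hB : G.IsMinorModel H B) {w w' : W}
    (hw : H.Adj w w') : B w ⊆ G.support := by
  obtain ⟨u, hu, v, -, huv⟩ := hB.exists_adj hw
  intro z hz
  by_cases hzu : z = u
  · exact hzu ▸ ⟨v, huv⟩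
  obtain ⟨z', hz'⟩ := mem_support_of_reachable (G := G.induce (B w)) (u := ⟨z, hz⟩) (v := ⟨u, hu⟩)
    (by simpa using hzu) (hB.connected w ⟨z, hz⟩ ⟨u, hu⟩)
  exact ⟨z', hz'⟩

theorem _root_.HasMinor.mono (h : HasMinor G H) (hG : G ⊑ G') : HasMinor G' H := by
  obtain ⟨B, hB⟩ := hasMinor_iff_exists_isMinorModel.mp h
  exact hasMinor_iff_exists_isMinorModel.mpr ⟨_, hB.map hG.some⟩

theorem IsContained.hasMinor (h : H ⊑ G) : HasMinor G H :=
  HasMinor.mono (hasMinor_iff_exists_isMinorModel.mpr ⟨_, isMinorModel_singleton H⟩) h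

theorem IsMinorModel.cons_top {k : ℕ} {B : Fin k → Set V} (hB : G.IsMinorModel ⊤ B) {x : V}
    (hBx : ∀ i, B i ⊆ G.neighborSet x) :
    G.IsMinorModel ⊤ (Fin.cons {x} B : Fin (k + 1) → Set V) := by
  have hx : ∀ i, x ∉ B i := fun i hxi => G.irrefl (hBx i hxi)
  refine ⟨Fin.cases (Set.singleton_nonempty x) hB.nonempty, fun i j hij => ?_,
    fun i => ?_, fun i j hij => ?_⟩
  · induction i using Fin.cases <;> induction j using Fin.cases
    · exact absurd rfl hij
    · simpa using hx _
    · simpa using hx _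
    · simpa using hB.disjoint (by simpa using hij)
  · induction i using Fin.cases
    · rw [Fin.cons_zero, induce_singleton_eq_top]
      exact connected_top
    · rw [Fin.cons_succ]
      exact hB.connected _
  · induction i using Fin.cases <;> induction j using Fin.cases
    · exact absurd rfl hij
    · obtain ⟨b, hb⟩ := hB.nonempty ‹_›
      exact ⟨x, rfl, b, hb, hBx _ hb⟩
    · obtain ⟨b, hb⟩ := hB.nonempty ‹_›
      exact ⟨b, hb, x, rfl, (hBx _ hb).symm⟩
    · simpa using hB.exists_adj (by simpa using hij)

theorem _root_.HasMinor.top_succ_of_induce_neighborSet {k : ℕ} {x : V}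
    (h : HasMinor (G.induce (G.neighborSet x)) (⊤ : SimpleGraph (Fin k))) :
    HasMinor G (⊤ : SimpleGraph (Fin (k + 1))) := by
  obtain ⟨B, hB⟩ := hasMinor_iff_exists_isMinorModel.mp h
  refine hasMinor_iff_exists_isMinorModel.mpr ⟨_, (hB.map (Copy.induce G _)).cons_top (x := x) ?_⟩
  rintro i _ ⟨v, -, rfl⟩
  exact v.2

/-- Contraction of the edge `xy` onto `x`. The vertex `y` stays behind as an isolated vertex,
so that the contracted graph lives on the same vertex type. -/
def contractEdge (G : SimpleGraph V) (x y : V) : SimpleGraph V :=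
  fromRel fun a b => a ≠ y ∧ b ≠ y ∧ (G.Adj a b ∨ a = x ∧ G.Adj y b)

instance [DecidableEq V] [DecidableRel G.Adj] (x y : V) : DecidableRel (G.contractEdge x y).Adj :=
  inferInstanceAs (DecidableRel (fromRel _).Adj)

section Contraction

variable {x y : V}

theorem contractEdge_adj {a b : V} : (G.contractEdge x y).Adj a b ↔ a ≠ b ∧
    (a ≠ y ∧ b ≠ y ∧ (G.Adj a b ∨ a = x ∧ G.Adj y b) ∨
      b ≠ y ∧ a ≠ y ∧ (G.Adj b a ∨ b = x ∧ G.Adj y a)) :=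
  fromRel_adj _ _ _

theorem deleteIncidenceSet_le_contractEdge : G.deleteIncidenceSet y ≤ G.contractEdge x y :=
  fun a b h => by
    obtain ⟨hab, ha, hb⟩ := deleteIncidenceSet_adj.mp h
    exact contractEdge_adj.mpr ⟨hab.ne, Or.inl ⟨ha, hb, Or.inl hab⟩⟩

theorem support_contractEdge_subset (hxy : G.Adj x y) :
    (G.contractEdge x y).support ⊆ G.support \ {y} := by
  rintro a ⟨b, hab⟩
  obtain ⟨-, ⟨ha, -, h | ⟨rfl, -⟩⟩ | ⟨-, ha, h | ⟨-, h⟩⟩⟩ := contractEdge_adj.mp hab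
  exacts [⟨⟨b, h⟩, ha⟩, ⟨⟨y, hxy⟩, ha⟩, ⟨⟨b, h.symm⟩, ha⟩, ⟨⟨y, h.symm⟩, ha⟩]

theorem Reachable.lift (f : V → V') (hf : ∀ ⦃a b⦄, G.Adj a b → G'.Reachable (f a) (f b))
    {a b : V} (h : G.Reachable a b) : G'.Reachable (f a) (f b) := by
  simp_rw [reachable_iff_reflTransGen] at hf h ⊢
  exact Relation.ReflTransGen.lift' f (fun _ _ hab => hf hab) _ _ h

theorem connected_induce_insert_of_contractEdge (hxy : G.Adj x y) {B : Set V} (hx : x ∈ B)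
    (hB : ((G.contractEdge x y).induce B).Connected) : (G.induce (insert y B)).Connected := by
  let ι : B → ↥(insert y B) := Set.inclusion (Set.subset_insert y B)
  have hy : (G.induce (insert y B)).Adj (ι ⟨x, hx⟩) ⟨y, Set.mem_insert y B⟩ := hxy
  have hG : ∀ a b : B, G.Adj a b → (G.induce (insert y B)).Reachable (ι a) (ι b) :=
    fun _ _ h => Adj.reachable h
  have hyG : ∀ b : B, G.Adj y b → (G.induce (insert y B)).Reachable (ι ⟨x, hx⟩) (ι b) :=
    fun _ h => hy.reachable.trans (Adj.reachable h)
  have hlift : ∀ ⦃a b : B⦄, ((G.contractEdge x y).induce B).Adj a b →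
      (G.induce (insert y B)).Reachable (ι a) (ι b) := by
    rintro ⟨a, ha⟩ ⟨b, hb⟩ hab
    obtain ⟨-, ⟨-, -, h | ⟨rfl, h⟩⟩ | ⟨-, -, h | ⟨rfl, h⟩⟩⟩ := contractEdge_adj.mp hab
    exacts [hG _ _ h, hyG _ h, (hG _ _ h).symm, (hyG _ h).symm]
  rw [connected_iff_exists_forall_reachable]
  refine ⟨ι ⟨x, hx⟩, ?_⟩
  rintro ⟨v, rfl | hv⟩
  · exact hy.reachable
  · exact (hB ⟨x, hx⟩ ⟨v, hv⟩).lift ι hlift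

open Classical in
theorem IsMinorModel.of_contractEdge (hxy : G.Adj x y) {B : W → Set V}
    (hB : (G.contractEdge x y).IsMinorModel H B) (hH : ∀ w, ∃ w', H.Adj w w') :
    G.IsMinorModel H (fun w => if x ∈ B w then insert y (B w) else B w) := by
  have hy : ∀ w, y ∉ B w := fun w hyw => by
    obtain ⟨w', hw'⟩ := hH w
    obtain ⟨z, hz⟩ := hB.subset_support hw' hyw
    exact (contractEdge_adj.mp hz).2.elim (·.1 rfl) (·.2.1 rfl)
  have hsub : ∀ w, B w ⊆ if x ∈ B w then insert y (B w) else B w := fun w => by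
    split_ifs
    exacts [Set.subset_insert _ _, subset_rfl]
  refine ⟨fun w => (hB.nonempty w).mono (hsub w), fun w₁ w₂ h => ?_, fun w => ?_,
    fun w₁ w₂ h => ?_⟩
  · have hd := hB.disjoint h
    split_ifs with h₁ h₂ h₂
    · exact absurd h₂ (Set.disjoint_left.mp hd h₁)
    · exact Set.disjoint_insert_left.mpr ⟨hy w₂, hd⟩
    · exact Set.disjoint_insert_right.mpr ⟨hy w₁, hd⟩
    · exact hd
  · by_cases hx : x ∈ B w
    · rw [if_pos hx]
      exact connected_induce_insert_of_contractEdge hxy hx (hB.connected w)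
    · rw [if_neg hx]
      refine (hB.connected w).mono fun a b hab => ?_
      obtain ⟨-, ⟨-, -, h | ⟨ha, -⟩⟩ | ⟨-, -, h | ⟨hb, -⟩⟩⟩ := contractEdge_adj.mp hab
      exacts [h, absurd (ha ▸ a.2) hx, h.symm, absurd (hb ▸ b.2) hx]
  · obtain ⟨u, hu, v, hv, huv⟩ := hB.exists_adj h
    obtain ⟨-, ⟨-, -, h | ⟨rfl, h⟩⟩ | ⟨-, -, h | ⟨rfl, h⟩⟩⟩ := contractEdge_adj.mp huv
    · exact ⟨u, hsub _ hu, v, hsub _ hv, h⟩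
    · exact ⟨y, by simp [hu], v, hsub _ hv, h⟩
    · exact ⟨u, hsub _ hu, v, hsub _ hv, h.symm⟩
    · exact ⟨u, hsub _ hu, y, by simp [hv], h.symm⟩

theorem _root_.HasMinor.of_contractEdge (hxy : G.Adj x y) (hH : ∀ w, ∃ w', H.Adj w w')
    (h : HasMinor (G.contractEdge x y) H) : HasMinor G H := by
  obtain ⟨B, hB⟩ := hasMinor_iff_exists_isMinorModel.mp h
  exact hasMinor_iff_exists_isMinorModel.mpr ⟨_, hB.of_contractEdge hxy hH⟩

end Contraction

section Counting

variable [Fintype V] [DecidableEq V] [DecidableRel G.Adj]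

theorem card_edgeFinset_le_choose_two_of_support_subset {s : Finset V} (h : G.support ⊆ s) :
    #G.edgeFinset ≤ (#s).choose 2 := by
  rw [← card_edgeFinset_induce_of_support_subset h]
  convert card_edgeFinset_le_card_choose_two (G := G.induce s) using 2
  · simp
  · exact (Fintype.card_coe s).symm.trans (Fintype.card_congr' rfl)

theorem card_edgeFinset_deleteEdges_singleton {e : Sym2 V} (he : e ∈ G.edgeFinset)
    [Fintype (G.deleteEdges {e}).edgeSet] :
    #(G.deleteEdges {e}).edgeFinset + 1 = #G.edgeFinset := by
  have : (G.deleteEdges {e}).edgeFinset = G.edgeFinset.erase e := by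
    ext; simp [and_comm]
  rw [this, card_erase_add_one he]

theorem card_edgeFinset_le_contractEdge {x y : V} (hxy : G.Adj x y) :
    #G.edgeFinset ≤
      #(G.contractEdge x y).edgeFinset + #(G.neighborFinset x ∩ G.neighborFinset y) + 1 := by
  set T := (G.neighborFinset y).erase x \ G.neighborFinset x
  have hT : G.degree y ≤ #T + #(G.neighborFinset x ∩ G.neighborFinset y) + 1 := by
    have : #T + #((G.neighborFinset y).erase x ∩ G.neighborFinset x) =
        #((G.neighborFinset y).erase x) := card_sdiff_add_card_inter _ _
    have := card_erase_add_one ((G.mem_neighborFinset y x).mpr hxy.symm)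
    have : #((G.neighborFinset y).erase x ∩ G.neighborFinset x) ≤
        #(G.neighborFinset x ∩ G.neighborFinset y) :=
      card_le_card (by rw [inter_comm]; exact inter_subset_inter_left (erase_subset _ _))
    rw [← card_neighborFinset_eq_degree]
    omega
  have hdisj : Disjoint (G.deleteIncidenceSet y).edgeFinset (T.image (s(x, ·))) := by
    refine Finset.disjoint_left.mpr fun e he he' => ?_
    obtain ⟨b, hb, rfl⟩ := mem_image.mp he'
    exact (mem_sdiff.mp hb).2 ((G.mem_neighborFinset x b).mpr
      ((G.deleteIncidenceSet_le y) ((mem_edgeFinset.mp he))))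
  have hsub : (G.deleteIncidenceSet y).edgeFinset ∪ T.image (s(x, ·)) ⊆
      (G.contractEdge x y).edgeFinset := by
    refine union_subset (edgeFinset_mono deleteIncidenceSet_le_contractEdge) ?_
    intro e he
    obtain ⟨b, hb, rfl⟩ := mem_image.mp he
    simp only [T, mem_sdiff, mem_erase, mem_neighborFinset] at hb
    exact mem_edgeFinset.mpr (contractEdge_adj.mpr
      ⟨Ne.symm hb.1.1, Or.inl ⟨hxy.ne, hb.1.2.ne', Or.inr ⟨rfl, hb.1.2⟩⟩⟩)
  have := card_le_card hsub
  rw [card_union_of_disjoint hdisj, card_image_of_injective _ fun _ _ h => Sym2.congr_right.mp h,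
    card_edgeFinset_deleteIncidenceSet] at this
  have := G.degree_le_card_edgeFinset y
  omega

omit [DecidableEq V] in
theorem exists_mem_degree_mul_card_le {s : Finset V} (hs : s.Nonempty) :
    ∃ x ∈ s, G.degree x * #s ≤ 2 * #G.edgeFinset := by
  refine exists_le_of_sum_le hs ?_
  rw [← sum_mul, sum_const, smul_eq_mul, ← sum_degrees_eq_twice_card_edges, mul_comm]
  exact Nat.mul_le_mul_left _ (sum_le_sum_of_subset (subset_univ s))

theorem mul_degree_le_two_mul_card_edgeFinset_induce_neighborSet {c : ℕ} {x : V}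
    (h : ∀ y, G.Adj x y → c ≤ #(G.neighborFinset x ∩ G.neighborFinset y)) :
    c * G.degree x ≤ 2 * #(G.induce (G.neighborSet x)).edgeFinset := by
  calc c * G.degree x = #(univ : Finset (G.neighborSet x)) • c := by
        rw [card_univ, card_neighborSet_eq_degree, smul_eq_mul, mul_comm]
    _ ≤ ∑ v, (G.induce (G.neighborSet x)).degree v := card_nsmul_le_sum _ _ _ fun v _ => ?_
    _ = _ := sum_degrees_eq_twice_card_edges _
  rw [← card_neighborFinset_eq_degree, ← card_map, map_neighborFinset_induce, inter_comm]
  refine (h v v.2).trans_eq ?_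
  congr 2

theorem degree_deleteIncidenceSet_add_one {u v : V} (huv : G.Adj u v) :
    (G.deleteIncidenceSet u).degree v + 1 = G.degree v := by
  have : (G.deleteIncidenceSet u).neighborFinset v = (G.neighborFinset v).erase u := by
    ext w
    simp [deleteIncidenceSet_adj, huv.ne', and_comm]
  rw [← card_neighborFinset_eq_degree, this, card_erase_add_one (by simpa using huv.symm),
    card_neighborFinset_eq_degree]

theorem lt_card_of_support_subset_of_le_card_edgeFinset {k : ℕ} (hk₂ : 2 ≤ k) (hk₄ : k ≤ 4)
    {s : Finset V} (hG : G.support ⊆ s) (hs : k - 1 ≤ #s)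
    (hm : (k - 1) * #s + 1 ≤ #G.edgeFinset + k.choose 2) : k < #s := by
  by_contra! hn
  have hE := card_edgeFinset_le_choose_two_of_support_subset hG
  generalize #G.edgeFinset = m at hm hE
  obtain h | h : #s = k - 1 ∨ #s = k := by omega
  all_goals rw [h] at hm hE; interval_cases k <;> norm_num [Nat.choose] at hm hE <;> omega

end Counting

universe u

/-- Mader's bound for `K_k` minors: on a support of `n ≥ k - 2` vertices, more than
`(k - 2) n - C(k - 1, 2)` edges force a `K_k` minor (stated additively, as subtraction in `ℕ`
truncates). Mader proved it for `k ≤ 7`. -/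
def MaderBound (k : ℕ) : Prop :=
  ∀ {V : Type u} [Fintype V] [DecidableEq V] (G : SimpleGraph V) [DecidableRel G.Adj]
    (s : Finset V), G.support ⊆ s → k - 2 ≤ #s →
      (k - 2) * #s + 1 ≤ #G.edgeFinset + (k - 1).choose 2 → HasMinor G (⊤ : SimpleGraph (Fin k))

theorem maderBound_two : MaderBound.{u} 2 := by
  intro V _ _ G _ s _ _ hm
  have hG : G ≠ ⊥ := edgeFinset_nonempty.mp (card_pos.mp (by simpa using hm))
  exact ((not_cliqueFree_iff_top_isContained 2).mp (cliqueFree_two.not.mpr hG)).hasMinor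

theorem MaderBound.hasMinor_top_succ_of_dense {k : ℕ} (hk₂ : 2 ≤ k) (hk₄ : k ≤ 4)
    (hk : MaderBound.{u} k) {V : Type u} [Fintype V] [DecidableEq V] {G : SimpleGraph V}
    [DecidableRel G.Adj] {s : Finset V} (hs : s.Nonempty)
    (hm : #G.edgeFinset + k.choose 2 ≤ (k - 1) * #s + 1) (hdeg : ∀ x ∈ s, k ≤ G.degree x)
    (hcommon : ∀ x y, G.Adj x y → k - 1 ≤ #(G.neighborFinset x ∩ G.neighborFinset y)) :
    HasMinor G (⊤ : SimpleGraph (Fin (k + 1))) := by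
  obtain ⟨x, hx, hxs⟩ := exists_mem_degree_mul_card_le (G := G) hs
  have hxk := hdeg x hx
  have hNx := mul_degree_le_two_mul_card_edgeFinset_induce_neighborSet (hcommon x)
  refine HasMinor.top_succ_of_induce_neighborSet
    (hk (G.induce (G.neighborSet x)) univ (by simp) ?_ ?_) <;>
  rw [card_univ, card_neighborSet_eq_degree]
  · omega
  generalize G.degree x = d at *
  generalize #(G.induce (G.neighborSet x)).edgeFinset = e at *
  interval_cases k <;> norm_num [Nat.choose] at hm ⊢
  · omega
  · omega
  · have : d < 6 := Nat.lt_of_mul_lt_mul_right (a := #s) (by omega)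
    omega

theorem MaderBound.succ {k : ℕ} (hk₂ : 2 ≤ k) (hk₄ : k ≤ 4) (hk : MaderBound.{u} k) :
    MaderBound.{u} (k + 1) := by
  intro V _ _ G _ s
  induction hsn : #s using Nat.strong_induction_on generalizing G s with
  | _ n ihn =>
  induction hEm : #G.edgeFinset using Nat.strong_induction_on generalizing G with
  | _ m ihm =>
  intro hG hs hm
  subst hsn hEm
  classical
  simp only [show k + 1 - 2 = k - 1 by omega, Nat.add_sub_cancel] at hs hm ihn ihm
  have hn := lt_card_of_support_subset_of_le_card_edgeFinset hk₂ hk₄ hG hs hm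
  have hchoose : k.choose 2 < (k - 1) * #s := by
    interval_cases k <;> norm_num [Nat.choose] <;> omega
  have hks : k - 1 ≤ (k - 1) * #s := Nat.le_mul_of_pos_right _ (by omega)
  by_cases hsurplus : (k - 1) * #s + 1 < #G.edgeFinset + k.choose 2
  · obtain ⟨e, he⟩ := card_pos.mp (show 0 < #G.edgeFinset by omega)
    have := card_edgeFinset_deleteEdges_singleton he
    exact (ihm _ (by omega) (G.deleteEdges {e}) rfl ((support_mono (deleteEdges_le _)).trans hG)
      hs (by omega)).mono (.of_le (deleteEdges_le _))
  by_cases hlow : ∃ x ∈ s, G.degree x ≤ k - 1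
  · obtain ⟨x, hx, hdeg⟩ := hlow
    have := card_edgeFinset_deleteIncidenceSet G x
    have := G.degree_le_card_edgeFinset x
    refine (ihn _ (by rw [card_erase_of_mem hx]; omega) (G.deleteIncidenceSet x) (s.erase x) rfl
      ?_ (by rw [card_erase_of_mem hx]; omega) ?_).mono (.of_le (deleteIncidenceSet_le G x))
    · rw [coe_erase]
      exact (support_deleteIncidenceSet_subset G x).trans (Set.sdiff_subset_sdiff_left hG)
    · rw [card_erase_of_mem hx, Nat.mul_sub_one]
      omega
  by_cases hsparse : ∃ x y, G.Adj x y ∧ #(G.neighborFinset x ∩ G.neighborFinset y) ≤ k - 2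
  · obtain ⟨x, y, hxy, hcommon⟩ := hsparse
    have hy : y ∈ s := hG ⟨x, hxy.symm⟩
    have := card_edgeFinset_le_contractEdge hxy
    have : Nontrivial (Fin (k + 1)) := Fin.nontrivial_iff_two_le.mpr (by omega)
    refine HasMinor.of_contractEdge hxy (fun w => (exists_ne w).imp fun _ h => h.symm)
      (ihn _ (by rw [card_erase_of_mem hy]; omega) (G.contractEdge x y) (s.erase y) rfl
        ?_ (by rw [card_erase_of_mem hy]; omega) ?_)
    · rw [coe_erase]
      exact (support_contractEdge_subset hxy).trans (Set.sdiff_subset_sdiff_left hG)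
    · rw [card_erase_of_mem hy, Nat.mul_sub_one]
      omega
  push Not at hsurplus hlow hsparse
  exact hk.hasMinor_top_succ_of_dense hk₂ hk₄ (card_pos.mp (by omega)) hsurplus
    (fun x hx => by have := hlow x hx; omega) (fun x y hxy => by have := hsparse x y hxy; omega)

theorem maderBound_five : MaderBound.{u} 5 :=
  MaderBound.succ (by norm_num) le_rfl <| MaderBound.succ (by norm_num) (by norm_num) <|
    MaderBound.succ le_rfl (by norm_num) maderBound_two

end SimpleGraph

open SimpleGraph in
/-- In a maximal planar graph (a planar graph with `3n − 6` edges) on `n ≥ 5` vertices,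
the vertices of degree `3` form an independent set. -/
theorem maximalPlanar_degree_three_indep {V : Type*} [Fintype V] [DecidableEq V]
    (G : SimpleGraph V) [DecidableRel G.Adj] (hplanar : IsPlanar G)
    (hn : 5 ≤ Fintype.card V)
    (hmax : G.edgeFinset.card = 3 * Fintype.card V - 6) :
    ∀ u v : V, G.degree u = 3 → G.degree v = 3 → ¬ G.Adj u v := by
  intro u v hu hv huv
  set G' := (G.deleteIncidenceSet u).deleteIncidenceSet v
  have hE : #G'.edgeFinset + 5 = #G.edgeFinset := by
    have := card_edgeFinset_deleteIncidenceSet G u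
    have : #G'.edgeFinset = _ := card_edgeFinset_deleteIncidenceSet _ v
    have := degree_deleteIncidenceSet_add_one huv
    have := (G.deleteIncidenceSet u).degree_le_card_edgeFinset v
    have := G.degree_le_card_edgeFinset u
    omega
  have hG' : G'.support ⊆ ↑((univ.erase u).erase v) := by
    rw [coe_erase, coe_erase, coe_univ]
    exact (support_deleteIncidenceSet_subset _ v).trans <| Set.sdiff_subset_sdiff_left <|
      (support_deleteIncidenceSet_subset G u).trans (Set.sdiff_subset_sdiff_left (Set.subset_univ _))
  have hcard : #((univ.erase u).erase v) + 2 = Fintype.card V := by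
    rw [card_erase_of_mem (mem_erase.mpr ⟨huv.ne', mem_univ v⟩), card_erase_of_mem (mem_univ u),
      card_univ]
    omega
  exact hplanar.1 <| (maderBound_five G' _ hG' (by omega) (by norm_num [Nat.choose]; omega)).mono <|
    .of_le <| (deleteIncidenceSet_le _ v).trans (deleteIncidenceSet_le G u)
end

section
/- In a maximal k-degenerate graph G on n ≥ k + 2 vertices, the vertices of degree k form an independent set, and for every i ≥ k+1 the subgraph induced by the vertices of degree i has chromatic number at most k + 1. -/
/-!
Peeling off a vertex of inner degree at most `k` shows, by induction down to `k` vertices, that a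
`k`-degenerate graph has at most `k|S| - k(k+1)/2` edges inside any `S` with `|S| ≥ k`; a maximal
one attains this on all of `V`. Deleting two adjacent vertices `u, v` removes
`deg u + deg v - 1` edges and leaves `n - 2 ≥ k` vertices, so `deg u + deg v - 1 ≥ 2k`; in
particular two vertices of degree `k` are never adjacent. A greedy colouring along the same
peeling order uses at most `k + 1` colours, and induced subgraphs inherit it.
-/

open Finset

/-- `G` is `k`-degenerate: every nonempty set of vertices contains a vertex with at
most `k` neighbors inside the set. -/
def IsKDegenerate {V : Type*} [DecidableEq V] (k : ℕ) (G : SimpleGraph V)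
    [DecidableRel G.Adj] : Prop :=
  ∀ S : Finset V, S.Nonempty → ∃ v ∈ S, (S.filter (G.Adj v)).card ≤ k

namespace SimpleGraph

variable {V : Type*} (G : SimpleGraph V) [DecidableRel G.Adj]

/-- Twice the number of edges of `G` inside `S`. -/
def innerDegreeSum (S : Finset V) : ℕ := ∑ u ∈ S, #(S.filter (G.Adj u))

lemma card_filter_adj_univ [Fintype V] (v : V) : #(univ.filter (G.Adj v)) = G.degree v := by
  rw [← card_neighborFinset_eq_degree, neighborFinset_eq_filter]

lemma innerDegreeSum_univ [Fintype V] : G.innerDegreeSum univ = 2 * #G.edgeFinset := by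
  rw [← sum_degrees_eq_twice_card_edges, innerDegreeSum]
  exact sum_congr rfl fun v _ => G.card_filter_adj_univ v

lemma innerDegreeSum_le [DecidableEq V] (S : Finset V) : G.innerDegreeSum S ≤ #S * (#S - 1) := by
  calc G.innerDegreeSum S ≤ ∑ _u ∈ S, (#S - 1) := sum_le_sum fun u hu => ?_
    _ = #S * (#S - 1) := by rw [sum_const, smul_eq_mul]
  rw [← card_erase_of_mem hu]
  refine card_le_card fun w hw => ?_
  obtain ⟨hwS, huw⟩ := mem_filter.mp hw
  exact mem_erase.mpr ⟨(G.ne_of_adj huw).symm, hwS⟩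

lemma innerDegreeSum_insert [DecidableEq V] {T : Finset V} {v : V} (hv : v ∉ T) :
    G.innerDegreeSum (insert v T) = G.innerDegreeSum T + 2 * #(T.filter (G.Adj v)) := by
  have hback : ∑ u ∈ T, (if G.Adj u v then 1 else 0) = #(T.filter (G.Adj v)) := by
    rw [← card_filter]
    simp only [G.adj_comm]
  have hterm : ∀ u ∈ T, #((insert v T).filter (G.Adj u)) =
      #(T.filter (G.Adj u)) + if G.Adj u v then 1 else 0 := by
    intro u _
    rw [filter_insert]
    split_ifs
    · exact card_insert_of_notMem fun h => hv (mem_filter.mp h).1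
    · rfl
  rw [innerDegreeSum, sum_insert hv, sum_congr rfl hterm, sum_add_distrib, hback,
    filter_insert, if_neg (G.irrefl), innerDegreeSum]
  ring

lemma innerDegreeSum_eq_erase [DecidableEq V] {S : Finset V} {v : V} (hv : v ∈ S) :
    G.innerDegreeSum S = G.innerDegreeSum (S.erase v) + 2 * #(S.filter (G.Adj v)) := by
  conv_lhs => rw [← insert_erase hv]
  rw [innerDegreeSum_insert G (notMem_erase v S), filter_erase,
    erase_eq_of_notMem fun h => G.irrefl (mem_filter.mp h).2]

end SimpleGraph

open SimpleGraph

namespace IsKDegenerate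

variable {V : Type*} [DecidableEq V] {G : SimpleGraph V} [DecidableRel G.Adj] {k : ℕ}

theorem innerDegreeSum_add_le (hG : IsKDegenerate k G) {S : Finset V} (hS : k ≤ #S) :
    G.innerDegreeSum S + k * (k + 1) ≤ 2 * k * #S := by
  obtain ⟨d, hd⟩ := Nat.exists_eq_add_of_le hS
  induction d generalizing S with
  | zero =>
    have := G.innerDegreeSum_le S
    rw [hd, add_zero] at this ⊢
    rcases k with _ | k
    · simpa using this
    · rw [Nat.add_sub_cancel] at this
      nlinarith
  | succ d ih =>
    obtain ⟨v, hvS, hv⟩ := hG S (card_pos.mp (by omega))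
    have hT : #(S.erase v) = k + d := by rw [card_erase_of_mem hvS]; omega
    have hrest := ih (by omega) hT
    rw [hT] at hrest
    rw [G.innerDegreeSum_eq_erase hvS, hd]
    linarith

theorem lt_degree_add_degree [Fintype V] (hG : IsKDegenerate k G)
    (hn : k + 2 ≤ Fintype.card V)
    (hmax : 2 * #G.edgeFinset + k * (k + 1) = 2 * k * Fintype.card V) {u v : V}
    (huv : G.Adj u v) : 2 * k < G.degree u + G.degree v := by
  have hvu : v ∈ univ.erase u := mem_erase.mpr ⟨(G.ne_of_adj huv).symm, mem_univ v⟩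
  have hdegu := G.card_filter_adj_univ u
  have hdegv : #((univ.erase u).filter (G.Adj v)) + 1 = G.degree v := by
    rw [filter_erase, card_erase_add_one (mem_filter.mpr ⟨mem_univ u, huv.symm⟩),
      G.card_filter_adj_univ]
  have hcard : #((univ.erase u).erase v) + 2 = Fintype.card V := by
    rw [card_erase_of_mem hvu, card_erase_of_mem (mem_univ u), card_univ]
    omega
  have hrest := hG.innerDegreeSum_add_le (S := (univ.erase u).erase v) (by omega)
  have hsplit := G.innerDegreeSum_eq_erase (mem_univ u)
  rw [G.innerDegreeSum_eq_erase hvu, G.innerDegreeSum_univ] at hsplit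
  rw [← hcard] at hmax
  linarith

theorem exists_coloring_on (hG : IsKDegenerate k G) (S : Finset V) :
    ∃ C : V → Fin (k + 1), ∀ u ∈ S, ∀ w ∈ S, G.Adj u w → C u ≠ C w := by
  induction S using strongInduction with
  | H S ih =>
    rcases S.eq_empty_or_nonempty with rfl | hS
    · exact ⟨0, by simp⟩
    obtain ⟨v, hvS, hv⟩ := hG S hS
    obtain ⟨C, hC⟩ := ih (S.erase v) (erase_ssubset hvS)
    obtain ⟨c, -, hc⟩ := exists_mem_notMem_of_card_lt_card
      (s := (S.filter (G.Adj v)).image C) (t := univ)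
      (by rw [card_univ, Fintype.card_fin]; exact card_image_le.trans_lt (by omega))
    have hfree : ∀ w ∈ S, G.Adj v w → C w ≠ c := fun w hw hvw h =>
      hc (h ▸ mem_image_of_mem C (mem_filter.mpr ⟨hw, hvw⟩))
    refine ⟨Function.update C v c, fun u hu w hw huw => ?_⟩
    rcases eq_or_ne u v with rfl | hu'
    · rw [Function.update_self, Function.update_of_ne (G.ne_of_adj huw).symm]
      exact (hfree w hw huw).symm
    rcases eq_or_ne w v with rfl | hw'
    · rw [Function.update_self, Function.update_of_ne hu']
      exact hfree u hu huw.symm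
    rw [Function.update_of_ne hu', Function.update_of_ne hw']
    exact hC u (mem_erase.mpr ⟨hu', hu⟩) w (mem_erase.mpr ⟨hw', hw⟩) huw

theorem colorable [Fintype V] (hG : IsKDegenerate k G) : G.Colorable (k + 1) :=
  let ⟨C, hC⟩ := hG.exists_coloring_on univ
  ⟨Coloring.mk C fun {u w} huw => hC u (mem_univ u) w (mem_univ w) huw⟩

end IsKDegenerate

/-- In a maximal `k`-degenerate graph (a `k`-degenerate graph with `kn − k(k+1)/2`
edges) on `n ≥ k + 2` vertices, the vertices of degree `k` form an independent set,
and for every `i ≥ k + 1` the subgraph induced by the vertices of degree `i` has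
chromatic number at most `k + 1`. -/
theorem maximalKDegenerate_props {V : Type*} [Fintype V] [DecidableEq V] (k : ℕ)
    (G : SimpleGraph V) [DecidableRel G.Adj] (hdeg : IsKDegenerate k G)
    (hn : k + 2 ≤ Fintype.card V)
    (hmax : G.edgeFinset.card = k * Fintype.card V - k * (k + 1) / 2) :
    (∀ u v : V, G.degree u = k → G.degree v = k → ¬ G.Adj u v) ∧
    (∀ i : ℕ, k + 1 ≤ i →
      (G.induce {v : V | G.degree v = i}).chromaticNumber ≤ ((k + 1 : ℕ) : ℕ∞)) := by
  have hedges : 2 * #G.edgeFinset + k * (k + 1) = 2 * k * Fintype.card V := by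
    obtain ⟨m, hm⟩ := Nat.even_mul_succ_self k
    have : k * (k + 1) ≤ k * Fintype.card V := Nat.mul_le_mul_left k (by omega)
    rw [hmax, mul_assoc]
    omega
  refine ⟨fun u v hu hv huv => ?_, fun i _ => ?_⟩
  · have := hdeg.lt_degree_add_degree hn hedges huv
    omega
  · exact (hdeg.colorable.of_hom (Embedding.induce _).toHom).chromaticNumber_le
end

section
/- Let G be a graph with δ(G) ≥ 1 and let R be a regular independent set of G (an independent set all of whose vertices have the same degree in G). Then V(G) \ R is a fair dominating set of G; consequently fd(G) ≤ n − α_reg(G). -/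
open Finset

/-- `S` is a fair dominating set: all vertices outside `S` have the same non-zero
number of neighbors in `S`. -/
def IsFairDominatingSet {V : Type*} [Fintype V] [DecidableEq V] (G : SimpleGraph V)
    [DecidableRel G.Adj] (S : Finset V) : Prop :=
  ∃ m : ℕ, 0 < m ∧ ∀ v : V, v ∉ S → (S.filter (G.Adj v)).card = m

open Classical in
/-- The fair domination number: the minimum size of a fair dominating set. -/
noncomputable def fairDomNum {V : Type*} [Fintype V] [DecidableEq V] (G : SimpleGraph V)
    [DecidableRel G.Adj] : ℕ :=
  sInf {c : ℕ | ∃ S : Finset V, IsFairDominatingSet G S ∧ S.card = c}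

open Classical in
/-- The regular independence number: the maximum size of an independent set of vertices
of equal degree. -/
noncomputable def regIndepNum {V : Type*} [Fintype V] [DecidableEq V] (G : SimpleGraph V)
    [DecidableRel G.Adj] : ℕ :=
  univ.powerset.sup fun S =>
    if (∃ d : ℕ, ∀ v ∈ S, G.degree v = d) ∧ (∀ u ∈ S, ∀ v ∈ S, ¬ G.Adj u v)
    then S.card else 0

def IsRegularIndepSet {V : Type*} [Fintype V] (G : SimpleGraph V) [DecidableRel G.Adj]
    (R : Finset V) : Prop :=
  (∃ d : ℕ, ∀ v ∈ R, G.degree v = d) ∧ ∀ u ∈ R, ∀ v ∈ R, ¬ G.Adj u v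

theorem isRegularIndepSet_empty {V : Type*} [Fintype V] (G : SimpleGraph V)
    [DecidableRel G.Adj] : IsRegularIndepSet G ∅ :=
  ⟨⟨0, by simp⟩, by simp⟩

section

variable {V : Type*} [Fintype V] [DecidableEq V] {G : SimpleGraph V} [DecidableRel G.Adj]

theorem filter_adj_compl_eq_neighborFinset {R : Finset V} {v : V}
    (hindep : ∀ u ∈ R, ¬ G.Adj v u) :
    (univ \ R).filter (G.Adj v) = G.neighborFinset v := by
  ext u
  simp only [mem_filter, mem_sdiff, mem_univ, true_and, SimpleGraph.mem_neighborFinset]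
  exact ⟨And.right, fun huv => ⟨fun hu => hindep u hu huv, huv⟩⟩

theorem IsRegularIndepSet.isFairDominatingSet_compl {R : Finset V}
    (hR : IsRegularIndepSet G R) (hδ : ∀ v ∈ R, 0 < G.degree v) :
    IsFairDominatingSet G (univ \ R) := by
  obtain ⟨⟨d, hd⟩, hindep⟩ := hR
  rcases R.eq_empty_or_nonempty with rfl | ⟨w, hw⟩
  · exact ⟨1, one_pos, by simp⟩
  · refine ⟨d, hd w hw ▸ hδ w hw, fun v hv => ?_⟩
    have hvR : v ∈ R := by simpa using hv
    rw [filter_adj_compl_eq_neighborFinset (hindep v hvR), G.card_neighborFinset_eq_degree,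
      hd v hvR]

theorem IsRegularIndepSet.fairDomNum_le {R : Finset V}
    (hR : IsRegularIndepSet G R) (hδ : ∀ v ∈ R, 0 < G.degree v) :
    fairDomNum G ≤ Fintype.card V - #R :=
  Nat.sInf_le ⟨univ \ R, hR.isFairDominatingSet_compl hδ, by
    rw [card_sdiff_of_subset (subset_univ R), card_univ]⟩

open Classical in
variable (G) in
theorem exists_isRegularIndepSet_card_eq_regIndepNum :
    ∃ R : Finset V, IsRegularIndepSet G R ∧ #R = regIndepNum G := by
  obtain ⟨S, -, hS⟩ := exists_mem_eq_sup univ.powerset ⟨∅, mem_powerset.2 (empty_subset _)⟩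
    fun S => if IsRegularIndepSet G S then #S else 0
  have hsup : regIndepNum G = if IsRegularIndepSet G S then #S else 0 := by
    rw [regIndepNum]; convert hS; rfl
  rw [hsup]
  by_cases hSreg : IsRegularIndepSet G S
  · exact ⟨S, hSreg, (if_pos hSreg).symm⟩
  · exact ⟨∅, isRegularIndepSet_empty G, (if_neg hSreg).symm⟩

end

/-- If `δ(G) ≥ 1` and `R` is a regular independent set, then `V ∖ R` is a fair
dominating set; consequently `fd(G) ≤ n − α_reg(G)`. -/
theorem fairDom_of_regIndep {V : Type*} [Fintype V] [DecidableEq V] (G : SimpleGraph V)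
    [DecidableRel G.Adj] (hδ : ∀ v : V, 1 ≤ G.degree v) (R : Finset V)
    (hreg : ∃ d : ℕ, ∀ v ∈ R, G.degree v = d)
    (hindep : ∀ u ∈ R, ∀ v ∈ R, ¬ G.Adj u v) :
    IsFairDominatingSet G (univ \ R) ∧
    fairDomNum G ≤ Fintype.card V - regIndepNum G := by
  refine ⟨IsRegularIndepSet.isFairDominatingSet_compl ⟨hreg, hindep⟩ fun v _ => hδ v, ?_⟩
  obtain ⟨S, hS, hcard⟩ := exists_isRegularIndepSet_card_eq_regIndepNum G
  exact hcard ▸ hS.fairDomNum_le fun v _ => hδ v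
end

section
/- Let G be a graph and let H = G_{k+1} be the graph obtained by replacing each vertex of G with a clique on k+1 vertices and joining cliques completely along edges of G. Then the k-independence number of H equals (k+1)·α(G). -/
open Finset

/-- The graph obtained from `G` by replacing each vertex with a clique on `k+1`
vertices, joining two cliques completely whenever the corresponding vertices of `G`
are adjacent (the lexicographic product `G[K_{k+1}]`). -/
def blowUp {V : Type*} (G : SimpleGraph V) (k : ℕ) : SimpleGraph (V × Fin (k + 1)) :=
  SimpleGraph.fromRel (fun a b => G.Adj a.1 b.1 ∨ a.1 = b.1)

open Classical in
/-- The independence number. -/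
noncomputable def indepNum {V : Type*} [Fintype V] (G : SimpleGraph V) : ℕ :=
  univ.powerset.sup fun S =>
    if ∀ u ∈ S, ∀ v ∈ S, ¬ G.Adj u v then S.card else 0

open Classical in
/-- The `k`-independence number: the maximum size of a vertex set inducing a subgraph
of maximum degree at most `k`. -/
noncomputable def kIndepNum {V : Type*} [Fintype V] [DecidableEq V] (G : SimpleGraph V)
    (k : ℕ) : ℕ :=
  univ.powerset.sup fun S =>
    if ∀ v ∈ S, (S.filter (fun u => G.Adj v u)).card ≤ k then S.card else 0

/-!
A set inducing maximum degree at most `k` is greedily `(k+1)`-colourable. Each colour class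
is independent in the blow-up, so it meets every clique at most once and projects onto an
independent set of `G`; hence `α_k(G[K_{k+1}]) ≤ (k+1)·α(G)`. Conversely, the blow-up of an
independent set of `G` induces disjoint copies of `K_{k+1}`, a graph of maximum degree `k`.
-/

section MaxCard

variable {α : Type*} [Fintype α] {P : Finset α → Prop} [DecidablePred P]

theorem Finset.card_le_sup_powerset_ite {S : Finset α} (hS : P S) :
    #S ≤ univ.powerset.sup fun T => if P T then #T else 0 := by
  simpa [hS] using le_sup (f := fun T => if P T then #T else 0) (mem_powerset.2 (subset_univ S))

theorem Finset.exists_card_eq_sup_powerset_ite (hP : P ∅) :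
    ∃ S, P S ∧ #S = univ.powerset.sup fun T => if P T then #T else 0 := by
  obtain ⟨S, -, hS⟩ := exists_mem_eq_sup (univ.powerset : Finset (Finset α))
    ⟨∅, empty_mem_powerset _⟩ fun T => if P T then #T else 0
  by_cases hPS : P S
  · exact ⟨S, hPS, by rw [hS, if_pos hPS]⟩
  · exact ⟨∅, hP, by rw [hS, if_neg hPS, card_empty]⟩

end MaxCard

section Numbers

variable {V : Type*} [Fintype V] (G : SimpleGraph V)

open Classical in
theorem card_le_indepNum {S : Finset V} (hS : ∀ u ∈ S, ∀ v ∈ S, ¬ G.Adj u v) :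
    #S ≤ indepNum G :=
  card_le_sup_powerset_ite hS

open Classical in
theorem exists_card_eq_indepNum :
    ∃ S : Finset V, (∀ u ∈ S, ∀ v ∈ S, ¬ G.Adj u v) ∧ #S = indepNum G :=
  exists_card_eq_sup_powerset_ite (by simp)

variable [DecidableEq V] (k : ℕ)

open Classical in
theorem card_le_kIndepNum {S : Finset V} (hS : ∀ v ∈ S, #(S.filter (G.Adj v ·)) ≤ k) :
    #S ≤ kIndepNum G k :=
  card_le_sup_powerset_ite hS

open Classical in
theorem exists_card_eq_kIndepNum :
    ∃ S : Finset V, (∀ v ∈ S, #(S.filter (G.Adj v ·)) ≤ k) ∧ #S = kIndepNum G k :=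
  exists_card_eq_sup_powerset_ite (by simp)

end Numbers

theorem SimpleGraph.exists_fin_coloring_of_card_filter_adj_le {W : Type*} [DecidableEq W]
    (H : SimpleGraph W) [DecidableRel H.Adj] (k : ℕ) (T : Finset W)
    (hT : ∀ v ∈ T, #(T.filter (H.Adj v ·)) ≤ k) :
    ∃ f : W → Fin (k + 1), ∀ u ∈ T, ∀ v ∈ T, H.Adj u v → f u ≠ f v := by
  induction T using Finset.induction_on with
  | empty => exact ⟨fun _ => 0, by simp⟩
  | insert a T haT ih =>
    obtain ⟨f, hf⟩ := ih fun v hv => (card_le_card (filter_subset_filter _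
      (subset_insert a T))).trans (hT v (mem_insert_of_mem hv))
    have hcard : #((T.filter (H.Adj a ·)).image f) < #(univ : Finset (Fin (k + 1))) := by
      calc #((T.filter (H.Adj a ·)).image f) ≤ #(T.filter (H.Adj a ·)) := card_image_le
        _ ≤ #((insert a T).filter (H.Adj a ·)) :=
          card_le_card (filter_subset_filter _ (subset_insert a T))
        _ < k + 1 := Nat.lt_succ_of_le (hT a (mem_insert_self a T))
        _ = _ := by simp
    obtain ⟨c, -, hc⟩ := exists_mem_notMem_of_card_lt_card hcard
    have hfresh : ∀ v ∈ T, H.Adj a v → Function.update f a c a ≠ Function.update f a c v := by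
      intro v hv hav
      rw [Function.update_self, Function.update_of_ne (ne_of_mem_of_not_mem hv haT)]
      exact fun hcv => hc (hcv ▸ mem_image_of_mem f (mem_filter.2 ⟨hv, hav⟩))
    refine ⟨Function.update f a c, fun u hu v hv huv => ?_⟩
    rcases mem_insert.1 hu with rfl | huT <;> rcases mem_insert.1 hv with rfl | hvT
    · exact absurd huv H.irrefl
    · exact hfresh v hvT huv
    · exact (hfresh u huT huv.symm).symm
    · rw [Function.update_of_ne (ne_of_mem_of_not_mem huT haT),
        Function.update_of_ne (ne_of_mem_of_not_mem hvT haT)]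
      exact hf u huT v hvT huv

section BlowUp

variable {V : Type*} (G : SimpleGraph V) (k : ℕ)

theorem blowUp_adj (a b : V × Fin (k + 1)) :
    (blowUp G k).Adj a b ↔ a ≠ b ∧ (G.Adj a.1 b.1 ∨ a.1 = b.1) := by
  rw [blowUp, SimpleGraph.fromRel_adj, G.adj_comm b.1, eq_comm (a := b.1), or_self]

theorem card_le_indepNum_of_blowUp [Fintype V] {A : Finset (V × Fin (k + 1))}
    (hA : ∀ a ∈ A, ∀ b ∈ A, ¬ (blowUp G k).Adj a b) : #A ≤ indepNum G := by
  classical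
  have hinj : Set.InjOn Prod.fst (A : Set (V × Fin (k + 1))) := fun a ha b hb hab =>
    by_contra fun hne => hA a ha b hb ((blowUp_adj G k a b).2 ⟨hne, Or.inr hab⟩)
  rw [← card_image_of_injOn hinj]
  refine card_le_indepNum G ?_
  simp only [mem_image]
  rintro _ ⟨a, ha, rfl⟩ _ ⟨b, hb, rfl⟩ hab
  exact hA a ha b hb ((blowUp_adj G k a b).2 ⟨fun h => hab.ne (congrArg Prod.fst h), Or.inl hab⟩)

theorem filter_blowUp_adj_subset [DecidableEq V] {S : Finset V}
    (hS : ∀ u ∈ S, ∀ v ∈ S, ¬ G.Adj u v) [DecidableRel (blowUp G k).Adj]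
    {v : V × Fin (k + 1)} (hv : v ∈ S ×ˢ univ) :
    (S ×ˢ univ).filter ((blowUp G k).Adj v) ⊆ ({v.1} ×ˢ univ).erase v := by
  intro u hu
  obtain ⟨hu, hvu⟩ := mem_filter.1 hu
  obtain ⟨hne, hG | heq⟩ := (blowUp_adj G k v u).1 hvu
  · exact absurd hG (hS v.1 (mem_product.1 hv).1 u.1 (mem_product.1 hu).1)
  · simp [hne.symm, heq]

theorem card_filter_blowUp_adj_le [DecidableEq V] {S : Finset V}
    (hS : ∀ u ∈ S, ∀ v ∈ S, ¬ G.Adj u v) [DecidableRel (blowUp G k).Adj]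
    {v : V × Fin (k + 1)} (hv : v ∈ S ×ˢ univ) :
    #((S ×ˢ univ).filter ((blowUp G k).Adj v)) ≤ k := by
  refine (card_le_card (filter_blowUp_adj_subset G k hS hv)).trans_eq ?_
  rw [card_erase_of_mem (by simp), card_product]
  simp

end BlowUp

/-- `α_k(G[K_{k+1}]) = (k+1)·α(G)`. -/
theorem kIndepNum_blowUp {V : Type*} [Fintype V] [DecidableEq V] (G : SimpleGraph V)
    (k : ℕ) :
    kIndepNum (blowUp G k) k = (k + 1) * indepNum G := by
  classical
  obtain ⟨T, hT, hTcard⟩ := exists_card_eq_kIndepNum (blowUp G k) k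
  obtain ⟨S, hS, hScard⟩ := exists_card_eq_indepNum G
  refine le_antisymm ?_ ?_
  · obtain ⟨f, hf⟩ := (blowUp G k).exists_fin_coloring_of_card_filter_adj_le k T hT
    have hclass (i : Fin (k + 1)) : #(T.filter (f · = i)) ≤ indepNum G :=
      card_le_indepNum_of_blowUp G k fun a ha b hb hab =>
        hf a (mem_filter.1 ha).1 b (mem_filter.1 hb).1 hab
          ((mem_filter.1 ha).2.trans (mem_filter.1 hb).2.symm)
    calc kIndepNum (blowUp G k) k = #T := hTcard.symm
      _ ≤ indepNum G * #(univ : Finset (Fin (k + 1))) :=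
        card_le_mul_card_image_of_maps_to (fun _ _ => mem_univ _) _ fun i _ => hclass i
      _ = (k + 1) * indepNum G := by simp [mul_comm]
  · calc (k + 1) * indepNum G = #(S ×ˢ (univ : Finset (Fin (k + 1)))) := by
          simp [hScard, mul_comm]
      _ ≤ kIndepNum (blowUp G k) k :=
        card_le_kIndepNum _ _ fun v hv => card_filter_blowUp_adj_le G k hS hv
end
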